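/- arXiv:1706.07827 — 6 statements merged into one kernel-verified Lean document; each statement's English description precedes it below -/
import Mathlib

section
/- Let y ∈ ℝ^n with A(y) > 0 and suppose the Hessian matrix (A_{ij}) = (∂²A/∂y^i∂y^j (y)) is invertible with inverse matrix (A^{ij}). Define the matrices g_{ij} = (A^{2/m−2}/m²)[ m·A·A_{ij} + (2−m)·A_i·A_j ] and g^{ij} = A^{−2/m}[ m·A·A^{ij} + ((m−2)/(m−1))·y^i·y^j ], where A, A_i are evaluated at y. Then (g^{ij}) is the inverse matrix of (g_{ij}), i.e. Σ_k g^{ik} g_{kj} = δ^i_j. -/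
/-!
`A` is homogeneous of degree `m`, so Euler's identity gives `∑ yᵏ A_k = m A` and, applied to
the derivative (homogeneous of degree `m - 1`), `∑ yᵏ A_{kj} = (m - 1) A_j`. Hence
`∑ A^{ik} A_k = yⁱ / (m - 1)`, and multiplying out `m A A^{ij} + ((m - 2)/(m - 1)) yⁱ yʲ` against
`m A A_{ij} + (2 - m) A_i A_j` all rank-one terms `yⁱ A_j` cancel, leaving `(m A)² δⁱⱼ`;
the powers of `A` in front contribute exactly `(m A)⁻²`.
-/

open Filter Topology Matrix

section Euler

variable {𝕜 E F : Type*} [NontriviallyNormedField 𝕜] [NormedAddCommGroup E] [NormedSpace 𝕜 E]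
  [NormedAddCommGroup F] [NormedSpace 𝕜 F] {f : E → F} {k : ℕ}

theorem fderiv_apply_self_of_eventually_homogeneous {y : E} (hf : DifferentiableAt 𝕜 f y)
    (hhom : ∀ᶠ t in 𝓝 (1 : 𝕜), f (t • y) = t ^ k • f y) :
    fderiv 𝕜 f y y = (k : 𝕜) • f y := by
  have hray : HasDerivAt (fun t : 𝕜 => f (t • y)) (fderiv 𝕜 f y y) 1 := by
    simpa [Function.comp_def] using hf.hasFDerivAt.comp_hasDerivAt_of_eq (1 : 𝕜)
      ((hasDerivAt_id (1 : 𝕜)).smul_const y) (one_smul 𝕜 y).symm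
  have hpow : HasDerivAt (fun t : 𝕜 => t ^ k • f y) ((k : 𝕜) • f y) 1 := by
    simpa using (hasDerivAt_pow k (1 : 𝕜)).smul_const (f y)
  exact hray.unique (hpow.congr_of_eventuallyEq hhom)

theorem smul_fderiv_smul_of_homogeneous (hf : Differentiable 𝕜 f)
    (hhom : ∀ (t : 𝕜) x, f (t • x) = t ^ k • f x) (t : 𝕜) (x : E) :
    t • fderiv 𝕜 f (t • x) = t ^ k • fderiv 𝕜 f x := by
  have hcomp : HasFDerivAt (fun x => f (t • x)) (t • fderiv 𝕜 f (t • x)) x := by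
    have := (hf (t • x)).hasFDerivAt.comp x ((hasFDerivAt_id x).const_smul t)
    rwa [ContinuousLinearMap.comp_smul, ContinuousLinearMap.comp_id] at this
  have hscaled : HasFDerivAt (fun x => f (t • x)) (t ^ k • fderiv 𝕜 f x) x := by
    rw [show (fun x => f (t • x)) = t ^ k • f from funext (hhom t)]
    exact (hf x).hasFDerivAt.const_smul _
  exact hcomp.unique hscaled

theorem fderiv_fderiv_apply_self_of_homogeneous (hf : ContDiff 𝕜 2 f) (hk : 1 ≤ k)
    (hhom : ∀ (t : 𝕜) x, f (t • x) = t ^ k • f x) (y : E) :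
    fderiv 𝕜 (fderiv 𝕜 f) y y = ((k : 𝕜) - 1) • fderiv 𝕜 f y := by
  obtain ⟨k, rfl⟩ := Nat.exists_eq_add_of_le' hk
  have hf' : Differentiable 𝕜 (fderiv 𝕜 f) :=
    (hf.fderiv_right (m := 1) le_rfl).differentiable one_ne_zero
  have hhom' : ∀ᶠ t in 𝓝 (1 : 𝕜), fderiv 𝕜 f (t • y) = t ^ k • fderiv 𝕜 f y := by
    filter_upwards [eventually_ne_nhds one_ne_zero] with t ht
    have := smul_fderiv_smul_of_homogeneous (hf.differentiable two_ne_zero) hhom t y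
    rw [pow_succ', mul_smul] at this
    exact smul_right_injective _ ht this
  rw [fderiv_apply_self_of_eventually_homogeneous (hf' y) hhom']
  push_cast
  ring_nf

end Euler

theorem smul_add_vecMulVec_mul_smul_add_vecMulVec {K ι : Type*} [Field K] [Fintype ι]
    [DecidableEq ι] {B H : Matrix ι ι K} {y α : ι → K} {m a : K}
    (hBH : B * H = 1) (hH : Hᵀ = H) (hyH : y ᵥ* H = (m - 1) • α) (hyα : y ⬝ᵥ α = m * a)
    (hm : m - 1 ≠ 0) :
    ((m * a) • B + ((m - 2) / (m - 1)) • vecMulVec y y) *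
        ((m * a) • H + (2 - m) • vecMulVec α α) = (m * a) ^ 2 • 1 := by
  have hBα : B *ᵥ α = (m - 1)⁻¹ • y := by
    have : B *ᵥ (H *ᵥ y) = y := by rw [mulVec_mulVec, hBH, one_mulVec]
    rw [← hH, mulVec_transpose, hyH, mulVec_smul] at this
    rw [← this, smul_smul, inv_mul_cancel₀ hm, one_smul]
  simp only [add_mul, mul_add, smul_mul_smul_comm, vecMulVec_mul_vecMulVec]
  simp only [hBH, mul_vecMulVec, hBα, vecMulVec_mul, hyH, hyα, smul_vecMulVec, vecMulVec_smul,
    smul_smul]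
  have hcoeff : (m - 2) / (m - 1) * (m * a) * (m - 1) + m * a * (2 - m) * (m - 1)⁻¹
      + (m - 2) / (m - 1) * (2 - m) * (m * a) = 0 := by
    field_simp
    ring
  linear_combination (norm := module) hcoeff • vecMulVec y α

section Coordinates

variable {𝕜 ι : Type*} [Fintype ι] [DecidableEq ι]

theorem dotProduct_apply_single [CommSemiring 𝕜] (L : (ι → 𝕜) →ₗ[𝕜] 𝕜) (v : ι → 𝕜) :
    v ⬝ᵥ (fun i => L (Pi.single i 1)) = L v := by
  conv_rhs => rw [pi_eq_sum_univ' v, map_sum]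
  simp [dotProduct]

variable [NontriviallyNormedField 𝕜]

noncomputable def hessianMatrix (f : (ι → 𝕜) → 𝕜) (y : ι → 𝕜) : Matrix ι ι 𝕜 :=
  Matrix.of fun i j => iteratedFDeriv 𝕜 2 f y ![Pi.single i 1, Pi.single j 1]

theorem vecMul_hessianMatrix (f : (ι → 𝕜) → 𝕜) (y v : ι → 𝕜) :
    v ᵥ* hessianMatrix f y = fun j => fderiv 𝕜 (fderiv 𝕜 f) y v (Pi.single j 1) := by
  ext j
  simpa [vecMul, hessianMatrix, iteratedFDeriv_two_apply] using
    dotProduct_apply_single ((fderiv 𝕜 (fderiv 𝕜 f) y).flip (Pi.single j 1)).toLinearMap v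

theorem transpose_hessianMatrix [IsRCLikeNormedField 𝕜] {f : (ι → 𝕜) → 𝕜} {y : ι → 𝕜}
    (hf : ContDiffAt 𝕜 2 f y) :
    (hessianMatrix f y)ᵀ = hessianMatrix f y := by
  ext i j
  simpa [hessianMatrix, iteratedFDeriv_two_apply] using
    hf.isSymmSndFDerivAt (by simp) (Pi.single j 1) (Pi.single i 1)

variable {f : (ι → 𝕜) → 𝕜} {k : ℕ}

theorem dotProduct_fderiv_single_of_homogeneous
    (hhom : ∀ (t : 𝕜) x, f (t • x) = t ^ k • f x) {y : ι → 𝕜} (hf : DifferentiableAt 𝕜 f y) :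
    y ⬝ᵥ (fun j => fderiv 𝕜 f y (Pi.single j 1)) = k * f y :=
  (dotProduct_apply_single (fderiv 𝕜 f y).toLinearMap y).trans
    (fderiv_apply_self_of_eventually_homogeneous hf (.of_forall fun t => hhom t y))

theorem vecMul_hessianMatrix_of_homogeneous (hhom : ∀ (t : 𝕜) x, f (t • x) = t ^ k • f x)
    (hf : ContDiff 𝕜 2 f) (hk : 1 ≤ k) (y : ι → 𝕜) :
    y ᵥ* hessianMatrix f y = ((k : 𝕜) - 1) • fun j => fderiv 𝕜 f y (Pi.single j 1) := by
  rw [vecMul_hessianMatrix, fderiv_fderiv_apply_self_of_homogeneous hf hk hhom]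
  rfl

end Coordinates

theorem Real.rpow_neg_mul_rpow_sub_two_mul_sq {a : ℝ} (ha : 0 < a) (s : ℝ) :
    a ^ (-s) * a ^ (s - 2) * a ^ 2 = 1 := by
  rw [← Real.rpow_add ha, show -s + (s - 2) = -2 by ring, Real.rpow_neg ha.le, Real.rpow_two,
    inv_mul_cancel₀ (by positivity)]

theorem ContinuousMultilinearMap.map_const_smul {R ι M N : Type*} [CommSemiring R] [Fintype ι]
    [AddCommMonoid M] [Module R M] [TopologicalSpace M] [AddCommMonoid N] [Module R N]
    [TopologicalSpace N] (T : ContinuousMultilinearMap R (fun _ : ι => M) N) (t : R) (x : M) :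
    T (fun _ => t • x) = t ^ Fintype.card ι • T fun _ => x := by
  simpa using T.map_smul_univ (fun _ => t) (fun _ => x)

theorem mth_root_inverse_fundamental_tensor_general
    {n m : ℕ} (hm : 2 ≤ m)
    (T : ContinuousMultilinearMap ℝ (fun _ : Fin m => (Fin n → ℝ)) ℝ)
    (A : (Fin n → ℝ) → ℝ)
    (hA : ∀ y, A y = T (fun _ => y))
    (y : Fin n → ℝ) (hy : 0 < A y)
    (Ainv : Matrix (Fin n) (Fin n) ℝ)
    (hAinv2 : Ainv * (Matrix.of fun i j =>
        iteratedFDeriv ℝ 2 A y ![Pi.single i 1, Pi.single j 1]) = 1) :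
    ∀ i j : Fin n,
      (∑ k : Fin n,
        (A y ^ (-((2 : ℝ) / (m : ℝ))) *
          ((m : ℝ) * A y * Ainv i k + (((m : ℝ) - 2) / ((m : ℝ) - 1)) * y i * y k)) *
        ((A y ^ ((2 : ℝ) / (m : ℝ) - 2) / (m : ℝ) ^ 2) *
          ((m : ℝ) * A y * iteratedFDeriv ℝ 2 A y ![Pi.single k 1, Pi.single j 1]
            + ((2 : ℝ) - (m : ℝ)) * (fderiv ℝ A y (Pi.single k 1))
              * (fderiv ℝ A y (Pi.single j 1)))))
      = if i = j then 1 else 0 := by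
  have hsmooth : ContDiff ℝ 2 A := by
    rw [show A = _ from funext hA]
    exact T.contDiff.comp (contDiff_pi.2 fun _ => contDiff_id)
  have hhom : ∀ (t : ℝ) x, A (t • x) = t ^ m • A x := by
    intro t x
    simpa [hA] using T.map_const_smul t x
  set α : Fin n → ℝ := fun k => fderiv ℝ A y (Pi.single k 1)
  have hm1 : (m : ℝ) - 1 ≠ 0 := by
    have : (2 : ℝ) ≤ m := by exact_mod_cast hm
    linarith
  have hinv := smul_add_vecMulVec_mul_smul_add_vecMulVec (H := hessianMatrix A y) hAinv2
    (transpose_hessianMatrix hsmooth.contDiffAt)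
    (vecMul_hessianMatrix_of_homogeneous hhom hsmooth (by omega) y)
    (dotProduct_fderiv_single_of_homogeneous hhom (hsmooth.differentiable two_ne_zero y)) hm1
  have hscale : A y ^ (-((2 : ℝ) / m)) * (A y ^ ((2 : ℝ) / m - 2) / (m : ℝ) ^ 2)
      * ((m : ℝ) * A y) ^ 2 = 1 := by
    rw [← Real.rpow_neg_mul_rpow_sub_two_mul_sq hy (2 / m)]
    field_simp
  have hg : (A y ^ (-((2 : ℝ) / m)) • ((m * A y) • Ainv + ((m - 2) / (m - 1) : ℝ) • vecMulVec y y))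
      * ((A y ^ ((2 : ℝ) / m - 2) / (m : ℝ) ^ 2) •
        ((m * A y) • hessianMatrix A y + (2 - m : ℝ) • vecMulVec α α)) = 1 := by
    rw [smul_mul_smul_comm, hinv, smul_smul, hscale, one_smul]
  intro i j
  rw [← Matrix.one_apply (n := Fin n) (α := ℝ), ← hg, Matrix.mul_apply]
  refine Finset.sum_congr rfl fun k _ => ?_
  simp only [Matrix.smul_apply, Matrix.add_apply, vecMulVec_apply, hessianMatrix, of_apply,
    smul_eq_mul, α]
  ring

/-- if the Hessian `(A_{ij})` of `A` at `y` is invertible with inverse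
`(A^{ij})`, then `g^{ij} = A^{-2/m}[m·A·A^{ij} + ((m-2)/(m-1))·y^i·y^j]` is the inverse
matrix of `g_{ij} = (A^{2/m-2}/m²)[m·A·A_{ij} + (2-m)·A_i·A_j]`. -/
theorem mth_root_inverse_fundamental_tensor
    {n m : ℕ} (hn : 1 ≤ n) (hm : 2 ≤ m)
    (T : ContinuousMultilinearMap ℝ (fun _ : Fin m => (Fin n → ℝ)) ℝ)
    (hTsymm : ∀ (σ : Equiv.Perm (Fin m)) (v : Fin m → (Fin n → ℝ)), T (v ∘ σ) = T v)
    (A : (Fin n → ℝ) → ℝ)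
    (hA : ∀ y, A y = T (fun _ => y))
    (y : Fin n → ℝ) (hy : 0 < A y)
    (Ainv : Matrix (Fin n) (Fin n) ℝ)
    (hAinv1 : (Matrix.of fun i j =>
        iteratedFDeriv ℝ 2 A y ![Pi.single i 1, Pi.single j 1]) * Ainv = 1)
    (hAinv2 : Ainv * (Matrix.of fun i j =>
        iteratedFDeriv ℝ 2 A y ![Pi.single i 1, Pi.single j 1]) = 1) :
    ∀ i j : Fin n,
      (∑ k : Fin n,
        (A y ^ (-((2 : ℝ) / (m : ℝ))) *
          ((m : ℝ) * A y * Ainv i k + (((m : ℝ) - 2) / ((m : ℝ) - 1)) * y i * y k)) *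
        ((A y ^ ((2 : ℝ) / (m : ℝ) - 2) / (m : ℝ) ^ 2) *
          ((m : ℝ) * A y * iteratedFDeriv ℝ 2 A y ![Pi.single k 1, Pi.single j 1]
            + ((2 : ℝ) - (m : ℝ)) * (fderiv ℝ A y (Pi.single k 1))
              * (fderiv ℝ A y (Pi.single j 1)))))
      = if i = j then 1 else 0 :=
  mth_root_inverse_fundamental_tensor_general hm T A hA y hy Ainv hAinv2
end

section
/- For every y ∈ ℝ^n with A(y) > 0, the angular metric of the m-th root metric F = A^{1/m}, defined by h(y)(u,v) := ½ D²(A^{2/m})(y)(u,v) − DF(y)(u)·DF(y)(v) (equivalently h_{ij} = g_{ij} − F^{−2} y_i y_j), is given by h(y)(u,v) = (1/m²)·A^{2/m−2}·[ m·A·D²A(y)(u,v) + (1−m)·DA(y)(u)·DA(y)(v) ] for all u, v ∈ ℝ^n. -/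
section aux

variable {E : Type*} [NormedAddCommGroup E] [NormedSpace ℝ E]

lemma rpow_first_deriv_aux (A : E → ℝ) (hAc : ContDiff ℝ (⊤ : ℕ∞) A) (y : E) (hy : 0 < A y)
    (s : ℝ) (w : E) :
    fderiv ℝ (fun z => A z ^ s) y w = s * A y ^ (s - 1) * fderiv ℝ A y w := by
  have h := ((hAc.differentiable (by simp) y).hasFDerivAt.rpow_const (p := s) (Or.inl hy.ne')).fderiv
  rw [h]
  simp [ContinuousLinearMap.smul_apply, smul_eq_mul, mul_assoc]

lemma rpow_second_deriv_aux (A : E → ℝ) (hAc : ContDiff ℝ (⊤ : ℕ∞) A) (y : E) (hy : 0 < A y)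
    (s : ℝ) (u v : E) :
    iteratedFDeriv ℝ 2 (fun z => A z ^ s) y ![u, v]
      = s * A y ^ (s - 1) * iteratedFDeriv ℝ 2 A y ![u, v]
        + s * (s - 1) * A y ^ (s - 2) * (fderiv ℝ A y u) * (fderiv ℝ A y v) := by
  have hAd : Differentiable ℝ A := hAc.differentiable (by simp)
  have hA' : ContDiff ℝ (⊤ : ℕ∞) (fderiv ℝ A) := hAc.fderiv_right (by simp)
  -- eventual equality of first derivatives
  have hpos : ∀ᶠ z in nhds y, 0 < A z :=
    hAc.continuous.continuousAt.preimage_mem_nhds (Ioi_mem_nhds hy)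
  have heq : (fun z => fderiv ℝ (fun w => A w ^ s) z)
      =ᶠ[nhds y] fun z => (s * A z ^ (s - 1)) • fderiv ℝ A z := by
    filter_upwards [hpos] with z hz
    exact ((hAd z).hasFDerivAt.rpow_const (Or.inl hz.ne')).fderiv
  -- derivative of the scalar factor
  have hc : HasFDerivAt (fun z => s * A z ^ (s - 1))
      ((s * ((s - 1) * A y ^ (s - 1 - 1))) • fderiv ℝ A y) y := by
    have := ((hAd y).hasFDerivAt.rpow_const (p := s - 1) (Or.inl hy.ne')).const_mul s
    simpa [smul_smul] using this
  have hF : HasFDerivAt (fderiv ℝ A) (fderiv ℝ (fderiv ℝ A) y) y :=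
    ((hA'.differentiable (by simp)) y).hasFDerivAt
  have hprod : HasFDerivAt (fun z => (s * A z ^ (s - 1)) • fderiv ℝ A z)
      ((s * A y ^ (s - 1)) • fderiv ℝ (fderiv ℝ A) y
        + (((s * ((s - 1) * A y ^ (s - 1 - 1))) • fderiv ℝ A y)).smulRight (fderiv ℝ A y)) y :=
    hc.smul hF
  have key : fderiv ℝ (fderiv ℝ (fun z => A z ^ s)) y
      = (s * A y ^ (s - 1)) • fderiv ℝ (fderiv ℝ A) y
        + (((s * ((s - 1) * A y ^ (s - 1 - 1))) • fderiv ℝ A y)).smulRight (fderiv ℝ A y) := by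
    rw [Filter.EventuallyEq.fderiv_eq heq]
    exact hprod.fderiv
  rw [iteratedFDeriv_two_apply, iteratedFDeriv_two_apply, key]
  have h12 : s - 1 - 1 = s - 2 := by ring
  simp only [h12, ContinuousLinearMap.add_apply, ContinuousLinearMap.smul_apply,
    ContinuousLinearMap.smulRight_apply, smul_eq_mul, Matrix.cons_val_zero,
    Matrix.cons_val_one, Matrix.head_cons]
  ring

end aux

/-- the angular metric `h(y)(u,v) = ½ D²(A^{2/m})(y)(u,v) - DF(y)(u)·DF(y)(v)`
of the m-th root metric `F = A^{1/m}` equals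
`(1/m²)·A^{2/m-2}·[m·A·D²A(u,v) + (1-m)·DA(u)·DA(v)]`. -/
theorem mth_root_angular_metric
    {n m : ℕ} (hn : 1 ≤ n) (hm : 2 ≤ m)
    (T : ContinuousMultilinearMap ℝ (fun _ : Fin m => (Fin n → ℝ)) ℝ)
    (hTsymm : ∀ (σ : Equiv.Perm (Fin m)) (v : Fin m → (Fin n → ℝ)), T (v ∘ σ) = T v)
    (A : (Fin n → ℝ) → ℝ)
    (hA : ∀ y, A y = T (fun _ => y))
    (y : Fin n → ℝ) (hy : 0 < A y)
    (u v : Fin n → ℝ) :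
    (1 / 2 : ℝ) * iteratedFDeriv ℝ 2 (fun z => A z ^ ((2 : ℝ) / (m : ℝ))) y ![u, v]
        - (fderiv ℝ (fun z => A z ^ ((1 : ℝ) / (m : ℝ))) y u)
          * (fderiv ℝ (fun z => A z ^ ((1 : ℝ) / (m : ℝ))) y v)
      = (1 / (m : ℝ) ^ 2) * A y ^ ((2 : ℝ) / (m : ℝ) - 2) *
        ((m : ℝ) * A y * iteratedFDeriv ℝ 2 A y ![u, v]
          + ((1 : ℝ) - (m : ℝ)) * (fderiv ℝ A y u) * (fderiv ℝ A y v)) := by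
  have hAc : ContDiff ℝ (⊤ : ℕ∞) A := by
    have hfun : A = fun z => T (fun _ : Fin m => z) := funext hA
    rw [hfun]
    exact T.contDiff.comp (contDiff_pi.mpr fun _ => contDiff_id)
  have hm0 : (m : ℝ) ≠ 0 := by positivity
  have hP : (0 : ℝ) < A y := hy
  rw [rpow_second_deriv_aux A hAc y hy,
    rpow_first_deriv_aux A hAc y hy,
    rpow_first_deriv_aux A hAc y hy]
  set P := A y with hPdef
  set Q := iteratedFDeriv ℝ 2 A y ![u, v]
  set Du := fderiv ℝ A y u
  set Dv := fderiv ℝ A y v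
  have e1 : P ^ ((2 : ℝ) / m - 1)
      = P ^ ((1 : ℝ) / m - 1) * P ^ ((1 : ℝ) / m - 1) * P := by
    rw [show (2 : ℝ) / m - 1 = ((1 : ℝ) / m - 1 + ((1 : ℝ) / m - 1)) + 1 by ring,
      Real.rpow_add hP, Real.rpow_one, Real.rpow_add hP]
  have e2 : P ^ ((2 : ℝ) / m - 2)
      = P ^ ((1 : ℝ) / m - 1) * P ^ ((1 : ℝ) / m - 1) := by
    rw [← Real.rpow_add hP]
    congr 1
    ring
  rw [e1, e2]
  generalize P ^ ((1 : ℝ) / m - 1) = Y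
  field_simp
  ring
end

section
/- (Spray coefficients of an m-th root metric.) Suppose in addition that for each (x, y) with y ≠ 0 the fiber Hessian matrix (A_{ij}) = (∂²A/∂y^i∂y^j) is invertible with inverse (A^{ij}). Then the spray coefficients of F = A^{1/m} satisfy G^i(x,y) = ½ ( ∂²A/∂x^k∂y^j (x,y) · y^k − ∂A/∂x^j (x,y) ) · A^{ij} for all x ∈ U and y ≠ 0. -/
open Filter Topology

namespace MthRootSprayAux

variable {N M : ℕ}
abbrev E (N : ℕ) := Fin N → ℝ

lemma contDiff_diag (T : ContinuousMultilinearMap ℝ (fun _ : Fin M => E N) ℝ) :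
    ContDiff ℝ (⊤ : ℕ∞) (fun y : E N => T (fun _ => y)) :=
  T.contDiff.comp (contDiff_pi.2 fun _ => contDiff_id)

lemma hom_diag (T : ContinuousMultilinearMap ℝ (fun _ : Fin M => E N) ℝ) (t : ℝ) (y : E N) :
    T (fun _ => t • y) = t ^ M * T (fun _ => y) := by
  simpa using T.map_smul_univ (fun _ => t) (fun _ => y)

lemma euler1 {f : E N → ℝ} (hf : ContDiff ℝ (⊤ : ℕ∞) f) (M : ℕ)
    (hhom : ∀ (t : ℝ) y, f (t • y) = t ^ M * f y) (y : E N) :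
    fderiv ℝ f y y = M * f y := by
  have hγ : HasDerivAt (fun t : ℝ => t • y) ((1:ℝ) • y) 1 := (hasDerivAt_id 1).smul_const y
  have h1 : HasDerivAt (fun t : ℝ => f (t • y)) (fderiv ℝ f ((1:ℝ) • y) ((1:ℝ) • y)) 1 :=
    (hf.differentiable (by simp) ((1:ℝ) • y)).hasFDerivAt.comp_hasDerivAt 1 hγ
  rw [one_smul] at h1
  have h2 : HasDerivAt (fun t : ℝ => t ^ M * f y) (((M:ℝ) * 1 ^ (M - 1)) * f y) 1 :=
    (hasDerivAt_pow M 1).mul_const (f y)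
  simp only [hhom] at h1
  have := h1.unique h2
  simpa using this

lemma euler_scale {f : E N → ℝ} (hf : ContDiff ℝ (⊤ : ℕ∞) f) (M : ℕ) (hM : 1 ≤ M)
    (hhom : ∀ (t : ℝ) y, f (t • y) = t ^ M * f y) (y v : E N) {t : ℝ} (ht : t ≠ 0) :
    fderiv ℝ f (t • y) v = t ^ (M - 1) * fderiv ℝ f y v := by
  have h1 : HasFDerivAt (fun z : E N => f (t • z))
      ((fderiv ℝ f (t • y)).comp (t • ContinuousLinearMap.id ℝ (E N))) y :=
    HasFDerivAt.comp y (hf.differentiable (by simp) (t • y)).hasFDerivAt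
      ((hasFDerivAt_id y).const_smul t)
  have h2 : HasFDerivAt (fun z : E N => f (t • z)) ((t ^ M) • fderiv ℝ f y) y := by
    have : (fun z : E N => f (t • z)) = fun z => t ^ M * f z := by
      funext z; exact hhom t z
    rw [this]
    exact ((hf.differentiable (by simp) y).hasFDerivAt).const_mul (t ^ M)
  have h3 := h1.unique h2
  have h4 := congrArg (fun (L : E N →L[ℝ] ℝ) => L v) h3
  simp only [ContinuousLinearMap.comp_apply, ContinuousLinearMap.smul_apply,
    ContinuousLinearMap.coe_smul', Pi.smul_apply, ContinuousLinearMap.coe_id', id_eq,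
    smul_eq_mul, map_smul] at h4
  have htM : t ^ M = t * t ^ (M - 1) := by
    rw [← pow_succ']; congr 1; omega
  rw [htM] at h4
  exact mul_left_cancel₀ ht (by linarith [h4])

lemma fderiv_fderiv_apply {f : E N → ℝ} (hf : ContDiff ℝ (⊤ : ℕ∞) f) (y u v : E N) :
    fderiv ℝ (fun z => fderiv ℝ f z v) y u = fderiv ℝ (fderiv ℝ f) y u v := by
  have hd : DifferentiableAt ℝ (fderiv ℝ f) y :=
    (hf.fderiv_right (m := (⊤ : ℕ∞)) (by simp)).differentiable (by simp) y
  rw [fderiv_clm_apply hd (differentiableAt_const v)]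
  simp

lemma euler2 {f : E N → ℝ} (hf : ContDiff ℝ (⊤ : ℕ∞) f) (M : ℕ) (hM : 1 ≤ M)
    (hhom : ∀ (t : ℝ) y, f (t • y) = t ^ M * f y) (y v : E N) :
    fderiv ℝ (fderiv ℝ f) y y v = ((M : ℝ) - 1) * fderiv ℝ f y v := by
  have hφ : Differentiable ℝ (fun z => fderiv ℝ f z v) :=
    Differentiable.clm_apply ((hf.fderiv_right (m := (⊤ : ℕ∞)) (by simp)).differentiable (by simp))
      (differentiable_const v)
  have hγ : HasDerivAt (fun t : ℝ => t • y) ((1:ℝ) • y) 1 := (hasDerivAt_id 1).smul_const y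
  have hk : HasDerivAt (fun t : ℝ => fderiv ℝ f (t • y) v)
      (fderiv ℝ (fun z => fderiv ℝ f z v) ((1:ℝ) • y) ((1:ℝ) • y)) 1 :=
    by have h := (hφ ((1:ℝ) • y)).hasFDerivAt.comp_hasDerivAt 1 hγ; exact h
  rw [one_smul] at hk
  have heq : (fun t : ℝ => fderiv ℝ f (t • y) v) =ᶠ[𝓝 (1:ℝ)]
      fun t => t ^ (M - 1) * fderiv ℝ f y v := by
    filter_upwards [eventually_ne_nhds one_ne_zero] with t ht
    exact euler_scale hf M hM hhom y v ht
  have hk2 : HasDerivAt (fun t : ℝ => t ^ (M - 1) * fderiv ℝ f y v)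
      ((((M - 1 : ℕ)):ℝ) * 1 ^ (M - 1 - 1) * fderiv ℝ f y v) 1 :=
    (hasDerivAt_pow (M - 1) 1).mul_const _
  have hk3 := hk2.congr_of_eventuallyEq heq
  have h5 := hk.unique hk3
  rw [fderiv_fderiv_apply hf] at h5
  rw [h5]
  have : ((M - 1 : ℕ) : ℝ) = (M : ℝ) - 1 := by
    have := Nat.cast_sub hM (R := ℝ); simpa using this
  simp [this]

lemma fderiv_fderiv_apply' {f : E N → ℝ} {y : E N}
    (hd : DifferentiableAt ℝ (fderiv ℝ f) y) (u v : E N) :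
    fderiv ℝ (fun z => fderiv ℝ f z v) y u = fderiv ℝ (fderiv ℝ f) y u v := by
  rw [fderiv_clm_apply hd (differentiableAt_const v)]
  simp

lemma rpow_snd_deriv {f : E N → ℝ} (hf : ContDiff ℝ (⊤ : ℕ∞) f) (c : ℝ) (y : E N)
    (hpos : ∀ᶠ z in 𝓝 y, 0 < f z) (u v : E N) :
    fderiv ℝ (fderiv ℝ (fun z => f z ^ c)) y u v =
      c * (c - 1) * f y ^ (c - 2) * fderiv ℝ f y u * fderiv ℝ f y v
        + c * f y ^ (c - 1) * fderiv ℝ (fderiv ℝ f) y u v := by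
  have hfy : 0 < f y := hpos.self_of_nhds
  have hΦs : ContDiffAt ℝ (⊤ : ℕ∞) (fun z => f z ^ c) y :=
    hf.contDiffAt.rpow_const_of_ne hfy.ne'
  have hd : DifferentiableAt ℝ (fderiv ℝ (fun z => f z ^ c)) y :=
    (hΦs.fderiv_right (m := (⊤ : ℕ∞)) (by simp)).differentiableAt (by simp)
  rw [← fderiv_fderiv_apply' hd u v]
  have heq : (fun z => fderiv ℝ (fun w => f w ^ c) z v) =ᶠ[𝓝 y]
      fun z => c * f z ^ (c - 1) * fderiv ℝ f z v := by
    filter_upwards [hpos] with z hz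
    have h := ((hf.differentiable (by simp) z).hasFDerivAt.rpow_const (p := c) (Or.inl hz.ne')).fderiv
    rw [h]
    simp [mul_assoc]
  rw [heq.fderiv_eq]
  have h1 : HasFDerivAt (fun z => c * f z ^ (c - 1))
      (c • (((c - 1) * f y ^ (c - 1 - 1)) • fderiv ℝ f y)) y :=
    ((hf.differentiable (by simp) y).hasFDerivAt.rpow_const (p := c - 1)
      (Or.inl hfy.ne')).const_mul c
  have hφ : Differentiable ℝ (fun z => fderiv ℝ f z v) :=
    Differentiable.clm_apply ((hf.fderiv_right (m := (⊤ : ℕ∞)) (by simp)).differentiable (by simp))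
      (differentiable_const v)
  have h2 : HasFDerivAt (fun z => fderiv ℝ f z v)
      (fderiv ℝ (fun z => fderiv ℝ f z v) y) y := (hφ y).hasFDerivAt
  have h3 := (h1.mul h2).fderiv
  rw [show (fun z => c * f z ^ (c - 1) * fderiv ℝ f z v)
    = (fun z => c * f z ^ (c - 1)) * (fun z => fderiv ℝ f z v) from rfl, h3]
  have h4 : fderiv ℝ (fun z => fderiv ℝ f z v) y u = fderiv ℝ (fderiv ℝ f) y u v :=
    fderiv_fderiv_apply hf y u v
  simp only [ContinuousLinearMap.add_apply, ContinuousLinearMap.smul_apply, smul_eq_mul, h4]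
  have : c - 1 - 1 = c - 2 := by ring
  rw [this]
  ring

lemma clm_apply_pi (L : E N →L[ℝ] ℝ) (y : E N) :
    L y = ∑ j, y j * L (Pi.single j 1) := by
  have hy : y = ∑ j, y j • (Pi.single j 1 : E N) := by
    funext k
    simp [Finset.sum_apply, Pi.single_apply]
  conv_lhs => rw [hy]
  rw [map_sum]
  simp [smul_eq_mul]
end MthRootSprayAux

open MthRootSprayAux in
/-- Lemma 1: the spray coefficients of the m-th root metric `F = A^{1/m}`
satisfy `G^i = ½ (A_{0j} - A_{x^j}) A^{ij}`, where `(A^{ij})` is the inverse of the fiber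
Hessian of `A` and `A_{0j} = ∂²A/∂x^k∂y^j · y^k`. -/
theorem mth_root_spray_coefficients
    {n m : ℕ} (hn : 1 ≤ n) (hm : 2 ≤ m)
    (U : Set (Fin n → ℝ)) (hU : IsOpen U)
    (T : (Fin n → ℝ) → ContinuousMultilinearMap ℝ (fun _ : Fin m => (Fin n → ℝ)) ℝ)
    (A : (Fin n → ℝ) → (Fin n → ℝ) → ℝ)
    (hAsmooth : ContDiffOn ℝ (⊤ : ℕ∞) (fun p : (Fin n → ℝ) × (Fin n → ℝ) => A p.1 p.2)
      (U ×ˢ Set.univ))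
    (hTsymm : ∀ x, ∀ (σ : Equiv.Perm (Fin m)) (v : Fin m → (Fin n → ℝ)),
      T x (v ∘ σ) = T x v)
    (hAT : ∀ x y, A x y = T x (fun _ => y))
    (hApos : ∀ x ∈ U, ∀ y : Fin n → ℝ, y ≠ 0 → 0 < A x y)
    (F : (Fin n → ℝ) → (Fin n → ℝ) → ℝ)
    (hF : ∀ x y, F x y = A x y ^ ((1 : ℝ) / (m : ℝ)))
    (g : (Fin n → ℝ) → (Fin n → ℝ) → Matrix (Fin n) (Fin n) ℝ)
    (hg : ∀ x y i j, g x y i j =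
      (1 / 2 : ℝ) * iteratedFDeriv ℝ 2 (fun z => (F x z) ^ 2) y
        ![Pi.single i 1, Pi.single j 1])
    (hgpos : ∀ x ∈ U, ∀ y : Fin n → ℝ, y ≠ 0 → (g x y).PosDef)
    (G : (Fin n → ℝ) → (Fin n → ℝ) → Fin n → ℝ)
    (hG : ∀ x ∈ U, ∀ y : Fin n → ℝ, y ≠ 0 → ∀ i, G x y i =
      (1 / 4 : ℝ) * ∑ l, ∑ j, ∑ k, (g x y)⁻¹ i l *
        (2 * fderiv ℝ (fun x' => g x' y j l) x (Pi.single k 1)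
          - fderiv ℝ (fun x' => g x' y j k) x (Pi.single l 1)) * y j * y k)
    (Ainv : (Fin n → ℝ) → (Fin n → ℝ) → Matrix (Fin n) (Fin n) ℝ)
    (hAinv1 : ∀ x ∈ U, ∀ y : Fin n → ℝ, y ≠ 0 →
      (Matrix.of fun i j =>
        iteratedFDeriv ℝ 2 (A x) y ![Pi.single i 1, Pi.single j 1]) * Ainv x y = 1)
    (hAinv2 : ∀ x ∈ U, ∀ y : Fin n → ℝ, y ≠ 0 →
      Ainv x y * (Matrix.of fun i j =>
        iteratedFDeriv ℝ 2 (A x) y ![Pi.single i 1, Pi.single j 1]) = 1) :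
    ∀ x ∈ U, ∀ y : Fin n → ℝ, y ≠ 0 → ∀ i, G x y i =
      (1 / 2 : ℝ) * ∑ j,
        (fderiv ℝ (fun x' => fderiv ℝ (A x') y (Pi.single j 1)) x y
          - fderiv ℝ (fun x' => A x' y) x (Pi.single j 1)) * Ainv x y i j := by
  intro x hx y hy i
  have hm0 : (m:ℝ) ≠ 0 := Nat.cast_ne_zero.mpr (by omega)
  have hm2 : (2:ℝ) ≤ (m:ℝ) := by exact_mod_cast hm
  have hm1 : (m:ℝ) - 1 ≠ 0 := by linarith
  obtain ⟨c, hcdef⟩ : ∃ c : ℝ, c = 2 / (m:ℝ) := ⟨_, rfl⟩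
  have hcm : c * m = 2 := by rw [hcdef]; exact div_mul_cancel₀ 2 hm0
  have hA : ∀ x', A x' = fun z => T x' (fun _ => z) := fun x' => funext (hAT x')
  have hCD : ∀ x', ContDiff ℝ (⊤ : ℕ∞) (A x') := fun x' => by rw [hA x']; exact contDiff_diag (T x')
  have hhom : ∀ x' (t : ℝ) z, A x' (t • z) = t ^ m * A x' z := fun x' t z => by
    rw [hA x']; exact hom_diag (T x') t z
  have hE1 : ∀ x' z, fderiv ℝ (A x') z z = m * A x' z := fun x' z =>
    euler1 (hCD x') m (hhom x') z
  have hE2 : ∀ x' (v : Fin n → ℝ), fderiv ℝ (fderiv ℝ (A x')) y y v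
      = ((m:ℝ) - 1) * fderiv ℝ (A x') y v :=
    fun x' v => euler2 (hCD x') m (by omega) (hhom x') y v
  have hA0 : ∀ x', A x' 0 = 0 := fun x' => by
    rw [hAT]; exact (T x').map_coord_zero ⟨0, by omega⟩ rfl
  have hF2 : ∀ x' ∈ U, (fun z => (F x' z) ^ 2) = fun z => (A x' z) ^ c := by
    intro x' hx'
    funext z
    rw [hF]
    by_cases hz : z = 0
    · subst hz
      rw [hA0, Real.zero_rpow (one_div_ne_zero hm0),
        Real.zero_rpow (by rw [hcdef]; exact div_ne_zero two_ne_zero hm0)]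
      norm_num
    · have hpos := hApos x' hx' z hz
      rw [← Real.rpow_natCast (A x' z ^ ((1:ℝ)/(m:ℝ))) 2, ← Real.rpow_mul hpos.le]
      congr 1
      rw [hcdef]; push_cast; ring
  have hgf : ∀ x' ∈ U, ∀ j l, g x' y j l =
      (1/2 : ℝ) * (c*(c-1)*(A x' y)^(c-2) * fderiv ℝ (A x') y (Pi.single j 1)
          * fderiv ℝ (A x') y (Pi.single l 1)
        + c*(A x' y)^(c-1) * fderiv ℝ (fderiv ℝ (A x')) y (Pi.single j 1) (Pi.single l 1)) := by
    intro x' hx' j l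
    have hpos : ∀ᶠ z in 𝓝 y, 0 < A x' z := by
      filter_upwards [eventually_ne_nhds hy] with z hz using hApos x' hx' z hz
    rw [hg, hF2 x' hx', iteratedFDeriv_two_apply]
    rw [show (![Pi.single j 1, Pi.single l 1] : Fin 2 → Fin n → ℝ) 0 = Pi.single j 1 from rfl,
      show (![Pi.single j 1, Pi.single l 1] : Fin 2 → Fin n → ℝ) 1 = Pi.single l 1 from rfl]
    rw [rpow_snd_deriv (hCD x') c y hpos]
  have hay : ∀ x', ∑ j, y j * fderiv ℝ (A x') y (Pi.single j 1) = m * A x' y := fun x' => by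
    rw [← clm_apply_pi]; exact hE1 x' y
  have hHy : ∀ x' (v : Fin n → ℝ), ∑ j, y j * fderiv ℝ (fderiv ℝ (A x')) y (Pi.single j 1) v
      = ((m:ℝ) - 1) * fderiv ℝ (A x') y v := fun x' v => by
    have h := clm_apply_pi ((fderiv ℝ (fderiv ℝ (A x')) y).flip v) y
    simp only [ContinuousLinearMap.flip_apply] at h
    rw [← h]; exact hE2 x' v
  have hS2 : ∀ x' ∈ U, ∀ l, ∑ j, g x' y j l * y j
      = (c/2) * (A x' y)^(c-1) * fderiv ℝ (A x') y (Pi.single l 1) := by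
    intro x' hx' l
    have hα := hApos x' hx' y hy
    have hPQ : (A x' y)^(c-2) * A x' y = (A x' y)^(c-1) := by
      have h := (Real.rpow_add hα (c-2) 1).symm
      rw [Real.rpow_one] at h
      rw [h]; congr 1; ring
    have expand : ∀ j, g x' y j l * y j =
        (1/2:ℝ)*c*(c-1)*(A x' y)^(c-2)*fderiv ℝ (A x') y (Pi.single l 1)
          * (y j * fderiv ℝ (A x') y (Pi.single j 1))
        + (1/2:ℝ)*c*(A x' y)^(c-1)
          * (y j * fderiv ℝ (fderiv ℝ (A x')) y (Pi.single j 1) (Pi.single l 1)) := by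
      intro j; rw [hgf x' hx' j l]; ring
    rw [Finset.sum_congr rfl fun j _ => expand j, Finset.sum_add_distrib,
      ← Finset.mul_sum, ← Finset.mul_sum, hay x', hHy x' (Pi.single l 1)]
    linear_combination ((1/2)*c*(c-1)*(m:ℝ)*fderiv ℝ (A x') y (Pi.single l 1)) * hPQ
      + ((1/2)*c*(A x' y)^(c-1)*fderiv ℝ (A x') y (Pi.single l 1)) * hcm
  have hS4 : ∀ x' ∈ U, ∑ j, ∑ k, g x' y j k * y j * y k = (A x' y)^c := by
    intro x' hx'
    have hα := hApos x' hx' y hy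
    have hQA : (A x' y)^(c-1) * A x' y = (A x' y)^c := by
      have h := (Real.rpow_add hα (c-1) 1).symm
      rw [Real.rpow_one] at h
      rw [h]; congr 1; ring
    have step : ∀ k, ∑ j, g x' y j k * y j * y k
        = ((c/2) * (A x' y)^(c-1) * fderiv ℝ (A x') y (Pi.single k 1)) * y k := by
      intro k; rw [← Finset.sum_mul, hS2 x' hx' k]
    rw [Finset.sum_comm, Finset.sum_congr rfl fun k _ => step k]
    have : ∀ k, ((c/2) * (A x' y)^(c-1) * fderiv ℝ (A x') y (Pi.single k 1)) * y k
        = ((c/2) * (A x' y)^(c-1)) * (y k * fderiv ℝ (A x') y (Pi.single k 1)) := by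
      intro k; ring
    rw [Finset.sum_congr rfl fun k _ => this k, ← Finset.mul_sum, hay x']
    linear_combination (c/2 * (m:ℝ)) * hQA + ((A x' y)^c / 2) * hcm
  have hαpos : 0 < A x y := hApos x hx y hy
  have hUy : U ×ˢ (Set.univ : Set (Fin n → ℝ)) ∈ 𝓝 ((x, y) : (Fin n → ℝ) × (Fin n → ℝ)) :=
    (hU.prod isOpen_univ).mem_nhds ⟨hx, trivial⟩
  have hjoint : ContDiffAt ℝ (⊤ : ℕ∞) (fun p : (Fin n → ℝ) × (Fin n → ℝ) => A p.1 p.2) (x, y) :=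
    hAsmooth.contDiffAt hUy
  have hCα : ContDiffAt ℝ (⊤ : ℕ∞) (fun x' => A x' y) x :=
    hjoint.comp x (contDiffAt_id.prodMk contDiffAt_const)
  have hCa : ContDiffAt ℝ (⊤ : ℕ∞) (fun x' => fderiv ℝ (A x') y) x :=
    ContDiffAt.fderiv (f := fun x' z => A x' z) (g := fun _ => y) hjoint contDiffAt_const (by simp)
  have hjoint2 : ContDiffAt ℝ (⊤ : ℕ∞)
      (fun p : (Fin n → ℝ) × (Fin n → ℝ) => fderiv ℝ (A p.1) p.2) (x, y) := by
    refine ContDiffAt.fderiv (f := fun (p : (Fin n → ℝ) × (Fin n → ℝ)) z => A p.1 z)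
      (g := Prod.snd) (n := ((⊤ : ℕ∞) : WithTop ℕ∞)) ?_ contDiffAt_snd (by simp)
    exact hjoint.comp ((x, y), y) ((contDiff_fst.fst.prodMk contDiff_snd).contDiffAt)
  have hCH : ∀ l : Fin n, ContDiffAt ℝ (⊤ : ℕ∞)
      (fun x' => fderiv ℝ (fun z => fderiv ℝ (A x') z (Pi.single l 1)) y) x := by
    intro l
    refine ContDiffAt.fderiv (f := fun x' z => fderiv ℝ (A x') z (Pi.single l 1))
      (g := fun _ => y) (n := ((⊤ : ℕ∞) : WithTop ℕ∞)) ?_ contDiffAt_const (by simp)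
    exact hjoint2.clm_apply contDiffAt_const
  have hdα : DifferentiableAt ℝ (fun x' => A x' y) x := hCα.differentiableAt (by simp)
  have hda : ∀ j : Fin n, DifferentiableAt ℝ (fun x' => fderiv ℝ (A x') y (Pi.single j 1)) x :=
    fun j => (hCa.clm_apply contDiffAt_const).differentiableAt (by simp)
  have hdHm : ∀ j l : Fin n, DifferentiableAt ℝ
      (fun x' => fderiv ℝ (fun z => fderiv ℝ (A x') z (Pi.single l 1)) y (Pi.single j 1)) x :=
    fun j l => ((hCH l).clm_apply contDiffAt_const).differentiableAt (by simp)
  have hHm : ∀ (x' : Fin n → ℝ) (j l : Fin n),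
      fderiv ℝ (fun z => fderiv ℝ (A x') z (Pi.single l 1)) y (Pi.single j 1)
      = fderiv ℝ (fderiv ℝ (A x')) y (Pi.single j 1) (Pi.single l 1) :=
    fun x' j l => fderiv_fderiv_apply (hCD x') y _ _
  have hgev : ∀ j l : Fin n, (fun x' => g x' y j l) =ᶠ[𝓝 x] (fun x' =>
      (1/2:ℝ) * (c*(c-1)*(A x' y)^(c-2) * fderiv ℝ (A x') y (Pi.single j 1)
          * fderiv ℝ (A x') y (Pi.single l 1)
        + c*(A x' y)^(c-1)
          * fderiv ℝ (fun z => fderiv ℝ (A x') z (Pi.single l 1)) y (Pi.single j 1))) := by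
    intro j l
    filter_upwards [hU.mem_nhds hx] with x' hx'
    rw [hgf x' hx' j l, hHm x' j l]
  have hdrp2 : DifferentiableAt ℝ (fun x' => (A x' y)^(c-2)) x :=
    hdα.rpow_const (Or.inl hαpos.ne')
  have hdrp1 : DifferentiableAt ℝ (fun x' => (A x' y)^(c-1)) x :=
    hdα.rpow_const (Or.inl hαpos.ne')
  have hdg : ∀ j l : Fin n, DifferentiableAt ℝ (fun x' => g x' y j l) x := by
    intro j l
    refine DifferentiableAt.congr_of_eventuallyEq ?_ (hgev j l)
    exact ((((hdrp2.const_mul _).mul (hda j)).mul (hda l)).add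
      ((hdrp1.const_mul _).mul (hdHm j l))).const_mul _
  -- interchange fderiv and the j-sum
  have hsum1 : ∀ l : Fin n, ∀ w, fderiv ℝ (fun x' => ∑ j, y j * g x' y j l) x w
      = ∑ j, y j * fderiv ℝ (fun x' => g x' y j l) x w := by
    intro l w
    rw [fderiv_fun_sum (u := Finset.univ) (A := fun j x' => y j * g x' y j l)
      (fun j _ => (hdg j l).const_mul (y j))]
    simp only [ContinuousLinearMap.coe_sum', Finset.sum_apply]
    refine Finset.sum_congr rfl fun j _ => ?_
    rw [fderiv_const_mul (hdg j l) (y j)]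
    simp
  have hsum2 : ∀ w, fderiv ℝ (fun x' => ∑ j, ∑ k, (y j * y k) * g x' y j k) x w
      = ∑ j, ∑ k, (y j * y k) * fderiv ℝ (fun x' => g x' y j k) x w := by
    intro w
    rw [fderiv_fun_sum (u := Finset.univ) (A := fun j x' => ∑ k, (y j * y k) * g x' y j k)
      (fun j _ => DifferentiableAt.fun_sum (fun k _ => (hdg j k).const_mul (y j * y k)))]
    simp only [ContinuousLinearMap.coe_sum', Finset.sum_apply]
    refine Finset.sum_congr rfl fun j _ => ?_
    rw [fderiv_fun_sum (u := Finset.univ) (A := fun k x' => (y j * y k) * g x' y j k)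
      (fun k _ => (hdg j k).const_mul (y j * y k))]
    simp only [ContinuousLinearMap.coe_sum', Finset.sum_apply]
    refine Finset.sum_congr rfl fun k _ => ?_
    rw [fderiv_const_mul (hdg j k) (y j * y k)]
    simp
  -- derivative of the contracted identities
  have hDS2 : ∀ l : Fin n, fderiv ℝ (fun x' => ∑ j, y j * g x' y j l) x =
      fderiv ℝ (fun x' => (c/2) * (A x' y)^(c-1) * fderiv ℝ (A x') y (Pi.single l 1)) x := by
    intro l
    apply Filter.EventuallyEq.fderiv_eq
    filter_upwards [hU.mem_nhds hx] with x' hx'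
    rw [← hS2 x' hx' l]
    exact Finset.sum_congr rfl fun j _ => mul_comm _ _
  have hDS4 : fderiv ℝ (fun x' => ∑ j, ∑ k, (y j * y k) * g x' y j k) x =
      fderiv ℝ (fun x' => (A x' y)^c) x := by
    apply Filter.EventuallyEq.fderiv_eq
    filter_upwards [hU.mem_nhds hx] with x' hx'
    rw [← hS4 x' hx']
    exact Finset.sum_congr rfl fun j _ => Finset.sum_congr rfl fun k _ => by ring
  have hprod : ∀ l : Fin n, ∀ w,
      fderiv ℝ (fun x' => (c/2) * (A x' y)^(c-1) * fderiv ℝ (A x') y (Pi.single l 1)) x w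
      = (c/2) * ((c-1) * (A x y)^(c-2) * fderiv ℝ (fun x' => A x' y) x w
            * fderiv ℝ (A x) y (Pi.single l 1)
        + (A x y)^(c-1) * fderiv ℝ (fun x' => fderiv ℝ (A x') y (Pi.single l 1)) x w) := by
    intro l w
    have h1 : HasFDerivAt (fun x' => (c/2) * (A x' y)^(c-1))
        ((c/2) • (((c-1) * (A x y)^(c-1-1)) • fderiv ℝ (fun x' => A x' y) x)) x :=
      (hdα.hasFDerivAt.rpow_const (p := c-1) (Or.inl hαpos.ne')).const_mul (c/2)
    have h2 : HasFDerivAt (fun x' => fderiv ℝ (A x') y (Pi.single l 1))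
        (fderiv ℝ (fun x' => fderiv ℝ (A x') y (Pi.single l 1)) x) x := (hda l).hasFDerivAt
    rw [show (fun x' => (c/2) * (A x' y)^(c-1) * fderiv ℝ (A x') y (Pi.single l 1))
      = (fun x' => (c/2) * (A x' y)^(c-1)) * (fun x' => fderiv ℝ (A x') y (Pi.single l 1))
      from rfl, (h1.mul h2).fderiv]
    simp only [ContinuousLinearMap.add_apply, ContinuousLinearMap.smul_apply, smul_eq_mul]
    have hc2 : c - 1 - 1 = c - 2 := by ring
    rw [hc2]; ring
  have hrpC : ∀ w, fderiv ℝ (fun x' => (A x' y)^c) x w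
      = c * (A x y)^(c-1) * fderiv ℝ (fun x' => A x' y) x w := by
    intro w
    rw [(hdα.hasFDerivAt.rpow_const (p := c) (Or.inl hαpos.ne')).fderiv]
    simp [mul_assoc]
  -- x-derivative of the Euler identity
  have hR1 : ∀ w, ∑ j, y j * fderiv ℝ (fun x' => fderiv ℝ (A x') y (Pi.single j 1)) x w
      = (m:ℝ) * fderiv ℝ (fun x' => A x' y) x w := by
    intro w
    have hfun : (fun x' => ∑ j, y j * fderiv ℝ (A x') y (Pi.single j 1))
        = fun x' => (m:ℝ) * A x' y := funext fun x' => hay x'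
    have h1 : fderiv ℝ (fun x' => ∑ j, y j * fderiv ℝ (A x') y (Pi.single j 1)) x w
        = ∑ j, y j * fderiv ℝ (fun x' => fderiv ℝ (A x') y (Pi.single j 1)) x w := by
      rw [fderiv_fun_sum (u := Finset.univ)
        (A := fun j x' => y j * fderiv ℝ (A x') y (Pi.single j 1))
        (fun j _ => (hda j).const_mul (y j))]
      simp only [ContinuousLinearMap.coe_sum', Finset.sum_apply]
      refine Finset.sum_congr rfl fun j _ => ?_
      rw [fderiv_const_mul (hda j) (y j)]; simp
    rw [← h1, hfun, fderiv_const_mul hdα ((m:ℝ))]; simp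
  -- matrix contraction identities at (x, y)
  have hHA : ∀ l j : Fin n,
      ∑ i', fderiv ℝ (fderiv ℝ (A x)) y (Pi.single l 1) (Pi.single i' 1) * Ainv x y i' j
      = if l = j then 1 else 0 := by
    intro l j
    have h := congrArg (fun M : Matrix (Fin n) (Fin n) ℝ => M l j) (hAinv1 x hx y hy)
    simp only [Matrix.mul_apply, Matrix.of_apply, Matrix.one_apply] at h
    rw [← h]
    refine Finset.sum_congr rfl fun i' _ => ?_
    rw [iteratedFDeriv_two_apply]
    rfl
  have ham : ∀ j : Fin n, ∑ i', fderiv ℝ (A x) y (Pi.single i' 1) * Ainv x y i' j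
      = y j / ((m:ℝ) - 1) := by
    intro j
    have key : ∀ i' : Fin n, fderiv ℝ (A x) y (Pi.single i' 1)
        = (∑ l, y l * fderiv ℝ (fderiv ℝ (A x)) y (Pi.single l 1) (Pi.single i' 1)) / ((m:ℝ)-1) := by
      intro i'
      rw [hHy x (Pi.single i' 1)]
      field_simp
    calc ∑ i', fderiv ℝ (A x) y (Pi.single i' 1) * Ainv x y i' j
        = ∑ i', ∑ l, (y l * fderiv ℝ (fderiv ℝ (A x)) y (Pi.single l 1) (Pi.single i' 1)
            * Ainv x y i' j) / ((m:ℝ)-1) := by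
          refine Finset.sum_congr rfl fun i' _ => ?_
          rw [key i', div_mul_eq_mul_div, Finset.sum_mul, Finset.sum_div]
      _ = ∑ l, (y l * if l = j then (1:ℝ) else 0) / ((m:ℝ)-1) := by
          rw [Finset.sum_comm]
          refine Finset.sum_congr rfl fun l _ => ?_
          rw [← Finset.sum_div]
          congr 1
          rw [Finset.sum_congr rfl fun i' _ => mul_assoc (y l) _ _, ← Finset.mul_sum, hHA l j]
      _ = y j / ((m:ℝ)-1) := by
          rw [Finset.sum_congr rfl fun l _ => by rw [mul_ite, mul_zero]]
          rw [← Finset.sum_div]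
          simp [Finset.sum_ite_eq']
  have hBy : ∑ j, (fderiv ℝ (fun x' => fderiv ℝ (A x') y (Pi.single j 1)) x y
        - fderiv ℝ (fun x' => A x' y) x (Pi.single j 1)) * y j
      = ((m:ℝ) - 1) * fderiv ℝ (fun x' => A x' y) x y := by
    have h2 : ∑ j, y j * fderiv ℝ (fun x' => A x' y) x (Pi.single j 1)
        = fderiv ℝ (fun x' => A x' y) x y := (clm_apply_pi _ y).symm
    have h3 : ∑ j, (fderiv ℝ (fun x' => fderiv ℝ (A x') y (Pi.single j 1)) x y
          - fderiv ℝ (fun x' => A x' y) x (Pi.single j 1)) * y j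
        = (∑ j, y j * fderiv ℝ (fun x' => fderiv ℝ (A x') y (Pi.single j 1)) x y)
          - ∑ j, y j * fderiv ℝ (fun x' => A x' y) x (Pi.single j 1) := by
      rw [← Finset.sum_sub_distrib]
      exact Finset.sum_congr rfl fun j _ => by ring
    rw [h3, hR1 y, h2]; ring
  have hdgy : ∀ j l : Fin n, ∑ k, fderiv ℝ (fun x' => g x' y j l) x (Pi.single k 1) * y k
      = fderiv ℝ (fun x' => g x' y j l) x y := by
    intro j l
    rw [Finset.sum_congr rfl fun k _ => mul_comm _ _]
    exact (clm_apply_pi _ y).symm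
  have hpart1 : ∀ l : Fin n, ∑ j, y j * fderiv ℝ (fun x' => g x' y j l) x y
      = (c/2) * ((c-1) * (A x y)^(c-2) * fderiv ℝ (fun x' => A x' y) x y
            * fderiv ℝ (A x) y (Pi.single l 1)
        + (A x y)^(c-1) * fderiv ℝ (fun x' => fderiv ℝ (A x') y (Pi.single l 1)) x y) := by
    intro l
    rw [← hsum1 l y, hDS2 l, hprod l y]
  have hpart2 : ∀ l : Fin n,
      ∑ j, ∑ k, (y j * y k) * fderiv ℝ (fun x' => g x' y j k) x (Pi.single l 1)
      = c * (A x y)^(c-1) * fderiv ℝ (fun x' => A x' y) x (Pi.single l 1) := by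
    intro l
    rw [← hsum2 (Pi.single l 1), hDS4, hrpC]
  have hinner : ∀ l : Fin n, ∑ j, ∑ k,
      (2 * fderiv ℝ (fun x' => g x' y j l) x (Pi.single k 1)
        - fderiv ℝ (fun x' => g x' y j k) x (Pi.single l 1)) * y j * y k
      = c*(c-1)*(A x y)^(c-2) * fderiv ℝ (fun x' => A x' y) x y
          * fderiv ℝ (A x) y (Pi.single l 1)
        + c*(A x y)^(c-1) * (fderiv ℝ (fun x' => fderiv ℝ (A x') y (Pi.single l 1)) x y
            - fderiv ℝ (fun x' => A x' y) x (Pi.single l 1)) := by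
    intro l
    have split : ∀ j k : Fin n,
        (2 * fderiv ℝ (fun x' => g x' y j l) x (Pi.single k 1)
          - fderiv ℝ (fun x' => g x' y j k) x (Pi.single l 1)) * y j * y k
        = 2 * (y j * (fderiv ℝ (fun x' => g x' y j l) x (Pi.single k 1) * y k))
          - (y j * y k) * fderiv ℝ (fun x' => g x' y j k) x (Pi.single l 1) := by
      intro j k; ring
    rw [Finset.sum_congr rfl fun j _ => Finset.sum_congr rfl fun k _ => split j k]
    rw [Finset.sum_congr rfl fun j (_ : j ∈ Finset.univ) => Finset.sum_sub_distrib _ _,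
      Finset.sum_sub_distrib]
    have e1 : ∑ j, ∑ k, 2 * (y j * (fderiv ℝ (fun x' => g x' y j l) x (Pi.single k 1) * y k))
        = 2 * ∑ j, y j * fderiv ℝ (fun x' => g x' y j l) x y := by
      rw [Finset.mul_sum]
      refine Finset.sum_congr rfl fun j _ => ?_
      rw [← hdgy j l, Finset.mul_sum, Finset.mul_sum]
    rw [e1, hpart1 l, hpart2 l]
    ring
  have hkey : ∀ l : Fin n, ∑ i', g x y l i' * (2 * ∑ j,
        (fderiv ℝ (fun x' => fderiv ℝ (A x') y (Pi.single j 1)) x y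
          - fderiv ℝ (fun x' => A x' y) x (Pi.single j 1)) * Ainv x y i' j)
      = c*(c-1)*(A x y)^(c-2) * fderiv ℝ (fun x' => A x' y) x y
          * fderiv ℝ (A x) y (Pi.single l 1)
        + c*(A x y)^(c-1) * (fderiv ℝ (fun x' => fderiv ℝ (A x') y (Pi.single l 1)) x y
            - fderiv ℝ (fun x' => A x' y) x (Pi.single l 1)) := by
    intro l
    have hterm : ∀ i' : Fin n, g x y l i' * (2 * ∑ j,
          (fderiv ℝ (fun x' => fderiv ℝ (A x') y (Pi.single j 1)) x y
            - fderiv ℝ (fun x' => A x' y) x (Pi.single j 1)) * Ainv x y i' j)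
        = ∑ j, (c*(c-1)*(A x y)^(c-2) * fderiv ℝ (A x) y (Pi.single l 1)
              * ((fderiv ℝ (fun x' => fderiv ℝ (A x') y (Pi.single j 1)) x y
                - fderiv ℝ (fun x' => A x' y) x (Pi.single j 1)))
              * (fderiv ℝ (A x) y (Pi.single i' 1) * Ainv x y i' j)
            + c*(A x y)^(c-1)
              * ((fderiv ℝ (fun x' => fderiv ℝ (A x') y (Pi.single j 1)) x y
                - fderiv ℝ (fun x' => A x' y) x (Pi.single j 1)))
              * (fderiv ℝ (fderiv ℝ (A x)) y (Pi.single l 1) (Pi.single i' 1)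
                * Ainv x y i' j)) := by
      intro i'
      have h2 : (2:ℝ) * ∑ j, (fderiv ℝ (fun x' => fderiv ℝ (A x') y (Pi.single j 1)) x y
            - fderiv ℝ (fun x' => A x' y) x (Pi.single j 1)) * Ainv x y i' j
          = ∑ j, 2 * ((fderiv ℝ (fun x' => fderiv ℝ (A x') y (Pi.single j 1)) x y
            - fderiv ℝ (fun x' => A x' y) x (Pi.single j 1)) * Ainv x y i' j) :=
        Finset.mul_sum _ _ _
      rw [hgf x hx l i', h2, Finset.mul_sum]
      exact Finset.sum_congr rfl fun j _ => by ring
    rw [Finset.sum_congr rfl fun i' _ => hterm i', Finset.sum_comm]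
    rw [Finset.sum_congr rfl fun j (_ : j ∈ Finset.univ) => Finset.sum_add_distrib]
    rw [Finset.sum_congr rfl fun j (_ : j ∈ Finset.univ) => by
      rw [← Finset.mul_sum, ← Finset.mul_sum, ham j, hHA l j]]
    rw [Finset.sum_add_distrib]
    have e2 : ∑ j, c*(c-1)*(A x y)^(c-2) * fderiv ℝ (A x) y (Pi.single l 1)
          * ((fderiv ℝ (fun x' => fderiv ℝ (A x') y (Pi.single j 1)) x y
            - fderiv ℝ (fun x' => A x' y) x (Pi.single j 1)))
          * (y j / ((m:ℝ) - 1))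
        = (c*(c-1)*(A x y)^(c-2) * fderiv ℝ (A x) y (Pi.single l 1) / ((m:ℝ)-1))
          * ∑ j, (fderiv ℝ (fun x' => fderiv ℝ (A x') y (Pi.single j 1)) x y
            - fderiv ℝ (fun x' => A x' y) x (Pi.single j 1)) * y j := by
      rw [Finset.mul_sum]
      exact Finset.sum_congr rfl fun j _ => by ring
    have e3 : ∑ j, c*(A x y)^(c-1)
          * ((fderiv ℝ (fun x' => fderiv ℝ (A x') y (Pi.single j 1)) x y
            - fderiv ℝ (fun x' => A x' y) x (Pi.single j 1)))
          * (if l = j then (1:ℝ) else 0)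
        = c*(A x y)^(c-1) * (fderiv ℝ (fun x' => fderiv ℝ (A x') y (Pi.single l 1)) x y
            - fderiv ℝ (fun x' => A x' y) x (Pi.single l 1)) := by
      rw [Finset.sum_congr rfl fun j (_ : j ∈ Finset.univ) => by
        rw [mul_ite, mul_one, mul_zero]]
      simp [Finset.sum_ite_eq]
    rw [e2, e3, hBy]
    field_simp
  have hdet : IsUnit (g x y).det := (hgpos x hx y hy).det_pos.ne'.isUnit
  rw [hG x hx y hy i]
  have step1 : ∑ l, ∑ j, ∑ k, (g x y)⁻¹ i l *
        (2 * fderiv ℝ (fun x' => g x' y j l) x (Pi.single k 1)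
          - fderiv ℝ (fun x' => g x' y j k) x (Pi.single l 1)) * y j * y k
      = ∑ l, (g x y)⁻¹ i l * (∑ j, ∑ k,
        (2 * fderiv ℝ (fun x' => g x' y j l) x (Pi.single k 1)
          - fderiv ℝ (fun x' => g x' y j k) x (Pi.single l 1)) * y j * y k) := by
    refine Finset.sum_congr rfl fun l _ => ?_
    rw [Finset.mul_sum]
    refine Finset.sum_congr rfl fun j _ => ?_
    rw [Finset.mul_sum]
    exact Finset.sum_congr rfl fun k _ => by ring
  rw [step1, Finset.sum_congr rfl fun l (_ : l ∈ Finset.univ) => by rw [hinner l]]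
  have hgu : (g x y).mulVec (fun i' => 2 * ∑ j,
        (fderiv ℝ (fun x' => fderiv ℝ (A x') y (Pi.single j 1)) x y
          - fderiv ℝ (fun x' => A x' y) x (Pi.single j 1)) * Ainv x y i' j)
      = fun l => c*(c-1)*(A x y)^(c-2) * fderiv ℝ (fun x' => A x' y) x y
          * fderiv ℝ (A x) y (Pi.single l 1)
        + c*(A x y)^(c-1) * (fderiv ℝ (fun x' => fderiv ℝ (A x') y (Pi.single l 1)) x y
            - fderiv ℝ (fun x' => A x' y) x (Pi.single l 1)) := by
    funext l
    simpa [Matrix.mulVec, dotProduct] using hkey l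
  have final : ∑ l, (g x y)⁻¹ i l *
        (c*(c-1)*(A x y)^(c-2) * fderiv ℝ (fun x' => A x' y) x y
          * fderiv ℝ (A x) y (Pi.single l 1)
        + c*(A x y)^(c-1) * (fderiv ℝ (fun x' => fderiv ℝ (A x') y (Pi.single l 1)) x y
            - fderiv ℝ (fun x' => A x' y) x (Pi.single l 1)))
      = 2 * ∑ j, (fderiv ℝ (fun x' => fderiv ℝ (A x') y (Pi.single j 1)) x y
          - fderiv ℝ (fun x' => A x' y) x (Pi.single j 1)) * Ainv x y i j := by
    calc ∑ l, (g x y)⁻¹ i l *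
        (c*(c-1)*(A x y)^(c-2) * fderiv ℝ (fun x' => A x' y) x y
          * fderiv ℝ (A x) y (Pi.single l 1)
        + c*(A x y)^(c-1) * (fderiv ℝ (fun x' => fderiv ℝ (A x') y (Pi.single l 1)) x y
            - fderiv ℝ (fun x' => A x' y) x (Pi.single l 1)))
        = ((g x y)⁻¹.mulVec ((g x y).mulVec (fun i' => 2 * ∑ j,
            (fderiv ℝ (fun x' => fderiv ℝ (A x') y (Pi.single j 1)) x y
              - fderiv ℝ (fun x' => A x' y) x (Pi.single j 1)) * Ainv x y i' j))) i := by
          rw [hgu]; simp [Matrix.mulVec, dotProduct]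
      _ = 2 * ∑ j, (fderiv ℝ (fun x' => fderiv ℝ (A x') y (Pi.single j 1)) x y
          - fderiv ℝ (fun x' => A x' y) x (Pi.single j 1)) * Ainv x y i j := by
          rw [Matrix.mulVec_mulVec, Matrix.nonsing_inv_mul _ hdet, Matrix.one_mulVec]
  rw [final]
  ring
end

section
/- (Theorem 1.) Suppose F = A^{1/m} is non-Riemannian, i.e. the Cartan torsion C_{ijk} does not vanish identically on U × (ℝ^n ∖ {0}), and suppose F is an isotropic Landsberg metric: there is a function c : U → ℝ such that L_{ijk}(x,y) = c(x)·F(x,y)·C_{ijk}(x,y) for all x ∈ U and all y ≠ 0. Then F is a Landsberg metric, i.e. L_{ijk}(x,y) = 0 for all x ∈ U and all y ≠ 0. -/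
private lemma iteratedFDeriv_comp_neg {E F : Type*} [NormedAddCommGroup E] [NormedSpace ℝ E]
    [NormedAddCommGroup F] [NormedSpace ℝ F] (f : E → F) (k : ℕ) (x : E) (v : Fin k → E) :
    iteratedFDeriv ℝ k (fun z => f (-z)) x v = iteratedFDeriv ℝ k f (-x) (fun i => -(v i)) := by
  have h := (ContinuousLinearEquiv.neg ℝ (M := E)).iteratedFDerivWithin_comp_right f
    uniqueDiffOn_univ (x := x) (Set.mem_univ _) k
  simp only [Set.preimage_univ, iteratedFDerivWithin_univ] at h
  have he : (fun z => f (-z)) = f ∘ (ContinuousLinearEquiv.neg ℝ (M := E)) := by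
    funext z; simp [Function.comp]
  rw [he, h]
  simp [ContinuousMultilinearMap.compContinuousLinearMap_apply]

private lemma iter_even_pt {E : Type*} [NormedAddCommGroup E] [NormedSpace ℝ E]
    (f : E → ℝ) (k : ℕ) (x : E)
    (hf : (fun z => f (-z)) =ᶠ[nhds (-x)] f) (v : Fin k → E) :
    iteratedFDeriv ℝ k f (-x) v = (-1 : ℝ) ^ k * iteratedFDeriv ℝ k f x v := by
  have h1 : iteratedFDeriv ℝ k f (-x) = iteratedFDeriv ℝ k (fun z => f (-z)) (-x) := by
    simp only [← iteratedFDerivWithin_univ]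
    refine ((hf.filter_mono ?_).iteratedFDerivWithin_eq hf.self_of_nhds k).symm
    rw [nhdsWithin_univ]
  rw [h1, iteratedFDeriv_comp_neg f k (-x) v, neg_neg]
  have h3 : (fun i => -(v i)) = fun i => (-1 : ℝ) • v i := by funext i; simp
  rw [h3, (iteratedFDeriv ℝ k f x).map_smul_univ (fun _ => (-1 : ℝ)) v]
  simp [Finset.prod_const]



/-- Theorem 1: a non-Riemannian m-th root metric with isotropic Landsberg
curvature `L_{ijk} = c(x)·F·C_{ijk}` is a Landsberg metric, i.e. `L = 0`. -/
theorem mth_root_isotropic_landsberg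
    {n m : ℕ} (hn : 1 ≤ n) (hm : 2 ≤ m)
    (U : Set (Fin n → ℝ)) (hU : IsOpen U)
    (T : (Fin n → ℝ) → ContinuousMultilinearMap ℝ (fun _ : Fin m => (Fin n → ℝ)) ℝ)
    (A : (Fin n → ℝ) → (Fin n → ℝ) → ℝ)
    (hAsmooth : ContDiffOn ℝ (⊤ : ℕ∞) (fun p : (Fin n → ℝ) × (Fin n → ℝ) => A p.1 p.2)
      (U ×ˢ Set.univ))
    (hTsymm : ∀ x, ∀ (σ : Equiv.Perm (Fin m)) (v : Fin m → (Fin n → ℝ)),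
      T x (v ∘ σ) = T x v)
    (hAT : ∀ x y, A x y = T x (fun _ => y))
    (hApos : ∀ x ∈ U, ∀ y : Fin n → ℝ, y ≠ 0 → 0 < A x y)
    (F : (Fin n → ℝ) → (Fin n → ℝ) → ℝ)
    (hF : ∀ x y, F x y = A x y ^ ((1 : ℝ) / (m : ℝ)))
    (g : (Fin n → ℝ) → (Fin n → ℝ) → Matrix (Fin n) (Fin n) ℝ)
    (hg : ∀ x y i j, g x y i j =
      (1 / 2 : ℝ) * iteratedFDeriv ℝ 2 (fun z => (F x z) ^ 2) y
        ![Pi.single i 1, Pi.single j 1])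
    (hgpos : ∀ x ∈ U, ∀ y : Fin n → ℝ, y ≠ 0 → (g x y).PosDef)
    -- spray coefficients
    (G : (Fin n → ℝ) → (Fin n → ℝ) → Fin n → ℝ)
    (hG : ∀ x ∈ U, ∀ y : Fin n → ℝ, y ≠ 0 → ∀ i, G x y i =
      (1 / 4 : ℝ) * ∑ l, ∑ j, ∑ k, (g x y)⁻¹ i l *
        (2 * fderiv ℝ (fun x' => g x' y j l) x (Pi.single k 1)
          - fderiv ℝ (fun x' => g x' y j k) x (Pi.single l 1)) * y j * y k)
    -- Cartan torsion C_{ijk} = ¼ ∂³(F²)/∂y^i∂y^j∂y^k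
    (C : (Fin n → ℝ) → (Fin n → ℝ) → Fin n → Fin n → Fin n → ℝ)
    (hC : ∀ x y i j k, C x y i j k =
      (1 / 4 : ℝ) * iteratedFDeriv ℝ 3 (fun z => (F x z) ^ 2) y
        ![Pi.single i 1, Pi.single j 1, Pi.single k 1])
    -- Landsberg curvature L_{ijk} = -½ y_s ∂³G^s/∂y^i∂y^j∂y^k, y_s = g_{sl} y^l
    (L : (Fin n → ℝ) → (Fin n → ℝ) → Fin n → Fin n → Fin n → ℝ)
    (hL : ∀ x ∈ U, ∀ y : Fin n → ℝ, y ≠ 0 → ∀ i j k, L x y i j k =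
      -(1 / 2 : ℝ) * ∑ s, (∑ l, g x y s l * y l) *
        iteratedFDeriv ℝ 3 (fun z => G x z s) y
          ![Pi.single i 1, Pi.single j 1, Pi.single k 1])
    -- F is non-Riemannian: the Cartan torsion does not vanish identically
    (hnonRiem : ¬ (∀ x ∈ U, ∀ y : Fin n → ℝ, y ≠ 0 → ∀ i j k, C x y i j k = 0))
    -- F is isotropic Landsberg: L = c(x)·F·C
    (c : (Fin n → ℝ) → ℝ)
    (hiso : ∀ x ∈ U, ∀ y : Fin n → ℝ, y ≠ 0 → ∀ i j k,
      L x y i j k = c x * F x y * C x y i j k) :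
    ∀ x ∈ U, ∀ y : Fin n → ℝ, y ≠ 0 → ∀ i j k, L x y i j k = 0 := by
  intro x hx y hy i j k
  -- A(x', -z) = (-1)^m A(x', z)
  have hAneg : ∀ x' (z : Fin n → ℝ), A x' (-z) = (-1 : ℝ) ^ m * A x' z := by
    intro x' z
    have h0 := (T x').map_smul_univ (fun _ : Fin m => (-1 : ℝ)) (fun _ => z)
    rw [hAT, hAT]
    simpa [Finset.prod_const, smul_eq_mul, neg_one_smul] using h0
  -- m is even (since A is positive at both y and -y)
  have hmeven : (-1 : ℝ) ^ m = 1 := by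
    rcases Nat.even_or_odd m with he | ho
    · exact he.neg_one_pow
    · exfalso
      have h1 := hApos x hx y hy
      have h2 := hApos x hx (-y) (neg_ne_zero.mpr hy)
      rw [hAneg, ho.neg_one_pow] at h2
      linarith
  have hAeven : ∀ x' (z : Fin n → ℝ), A x' (-z) = A x' z := by
    intro x' z; rw [hAneg, hmeven, one_mul]
  have hFeven : ∀ x' (z : Fin n → ℝ), F x' (-z) = F x' z := by
    intro x' z; rw [hF, hF, hAeven]
  have hF2 : ∀ x', (fun z => (fun z' => F x' z' ^ 2) (-z)) =ᶠ[nhds (-y)] (fun z' => F x' z' ^ 2) :=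
    fun x' => Filter.Eventually.of_forall (fun z => by simp [hFeven])
  -- g is even in y (everywhere)
  have hgeven : ∀ x' (y' : Fin n → ℝ), g x' (-y') = g x' y' := by
    intro x' y'
    ext a b
    rw [hg, hg]
    have := iter_even_pt (fun z => F x' z ^ 2) 2 y'
      (Filter.Eventually.of_forall (fun z => by simp [hFeven]))
      ![Pi.single a 1, Pi.single b 1]
    rw [this]
    norm_num
  -- G is even in y on U × (ℝⁿ \ {0})
  have hGeven : ∀ y' : Fin n → ℝ, y' ≠ 0 → ∀ s, G x (-y') s = G x y' s := by
    intro y' hy' s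
    rw [hG x hx (-y') (neg_ne_zero.mpr hy') s, hG x hx y' hy' s]
    simp only [hgeven, Pi.neg_apply, mul_neg, neg_mul, neg_neg]
  -- C is odd in y
  have hCodd : ∀ a b d, C x (-y) a b d = -C x y a b d := by
    intro a b d
    rw [hC, hC]
    have := iter_even_pt (fun z => F x z ^ 2) 3 y
      (Filter.Eventually.of_forall (fun z => by simp [hFeven]))
      ![Pi.single a 1, Pi.single b 1, Pi.single d 1]
    rw [this]
    ring
  -- L is even in y
  have hLeven : L x (-y) i j k = L x y i j k := by
    rw [hL x hx (-y) (neg_ne_zero.mpr hy) i j k, hL x hx y hy i j k]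
    congr 1
    refine Finset.sum_congr rfl fun s _ => ?_
    have h1 : (∑ l, g x (-y) s l * (-y) l) = -∑ l, g x y s l * y l := by
      simp [hgeven, mul_neg, Finset.sum_neg_distrib]
    have hnbhd : (fun z => (fun z' => G x z' s) (-z)) =ᶠ[nhds (-y)] (fun z' => G x z' s) := by
      have hmem : -y ∈ ({0}ᶜ : Set (Fin n → ℝ)) := by simp [hy]
      refine Filter.eventuallyEq_of_mem (isOpen_compl_singleton.mem_nhds hmem) ?_
      intro z hz
      exact hGeven z (by simpa using hz) s
    have h2 := iter_even_pt (fun z => G x z s) 3 y hnbhd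
      ![Pi.single i 1, Pi.single j 1, Pi.single k 1]
    rw [h1, h2]
    ring
  -- conclude
  have e1 := hiso x hx y hy i j k
  have e2 := hiso x hx (-y) (neg_ne_zero.mpr hy) i j k
  rw [hLeven, hFeven, hCodd] at e2
  linarith
end

section
/- (Theorem 2.) Let n ≥ 2. Suppose F = A^{1/m} has isotropic H-curvature: there is a smooth 1-form θ = θ_k(x) y^k on U such that H_{ij}(x,y) = ((n+1)/(2 F(x,y)))·θ(x,y)·h_{ij}(x,y) for all x ∈ U and all y ≠ 0. Then H vanishes identically: H_{ij}(x,y) = 0 for all x ∈ U and all y ≠ 0. -/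
noncomputable def negE (N : ℕ) : (Fin N → ℝ) ≃L[ℝ] (Fin N → ℝ) := ContinuousLinearEquiv.neg ℝ

lemma comp_negE {N : ℕ} (f : (Fin N → ℝ) → ℝ) : f ∘ (negE N) = fun z => f (-z) := by
  funext z; simp [negE]

lemma fderiv_negpt {N : ℕ} (f : (Fin N → ℝ) → ℝ) (x v : Fin N → ℝ) :
    fderiv ℝ (fun z => f (-z)) x v = -(fderiv ℝ f (-x) v) := by
  have h := (negE N).comp_right_fderiv (f := f) (x := x)
  rw [comp_negE] at h
  rw [h]
  simp [negE]

lemma itfd2_negpt {N : ℕ} (f : (Fin N → ℝ) → ℝ) (x u v : Fin N → ℝ) :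
    iteratedFDeriv ℝ 2 (fun z => f (-z)) x ![u, v] = iteratedFDeriv ℝ 2 f (-x) ![u, v] := by
  have h := ContinuousLinearEquiv.iteratedFDerivWithin_comp_right (negE N) f
    uniqueDiffOn_univ (x := x) (Set.mem_univ _) 2
  rw [Set.preimage_univ] at h
  simp only [iteratedFDerivWithin_univ] at h
  rw [comp_negE] at h
  rw [h, ContinuousMultilinearMap.compContinuousLinearMap_apply]
  have h2 : (fun k : Fin 2 => ((negE N : (Fin N → ℝ) →L[ℝ] (Fin N → ℝ))) (![u, v] k))
      = fun k => (-1 : ℝ) • (![u, v] k) := by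
    funext k; simp [negE]
  rw [h2, ContinuousMultilinearMap.map_smul_univ]
  have : (negE N) x = -x := by simp [negE]
  rw [this]
  simp

lemma itfd_congr_nhds {N : ℕ} {f g : (Fin N → ℝ) → ℝ} {x : Fin N → ℝ}
    (h : f =ᶠ[nhds x] g) : iteratedFDeriv ℝ 2 f x = iteratedFDeriv ℝ 2 g x := by
  rw [← iteratedFDerivWithin_univ, ← iteratedFDerivWithin_univ]
  exact Filter.EventuallyEq.iteratedFDerivWithin_eq (by rwa [nhdsWithin_univ]) h.eq_of_nhds 2


/-- Theorem 2: an m-th root metric (`n ≥ 2`) with isotropic H-curvature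
`H_{ij} = ((n+1)/(2F))·θ·h_{ij}` has vanishing H-curvature, `H = 0`. -/
theorem mth_root_isotropic_H_curvature
    {n m : ℕ} (hn : 2 ≤ n) (hm : 2 ≤ m)
    (U : Set (Fin n → ℝ)) (hU : IsOpen U)
    (T : (Fin n → ℝ) → ContinuousMultilinearMap ℝ (fun _ : Fin m => (Fin n → ℝ)) ℝ)
    (A : (Fin n → ℝ) → (Fin n → ℝ) → ℝ)
    (hAsmooth : ContDiffOn ℝ (⊤ : ℕ∞) (fun p : (Fin n → ℝ) × (Fin n → ℝ) => A p.1 p.2)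
      (U ×ˢ Set.univ))
    (hTsymm : ∀ x, ∀ (σ : Equiv.Perm (Fin m)) (v : Fin m → (Fin n → ℝ)),
      T x (v ∘ σ) = T x v)
    (hAT : ∀ x y, A x y = T x (fun _ => y))
    (hApos : ∀ x ∈ U, ∀ y : Fin n → ℝ, y ≠ 0 → 0 < A x y)
    (F : (Fin n → ℝ) → (Fin n → ℝ) → ℝ)
    (hF : ∀ x y, F x y = A x y ^ ((1 : ℝ) / (m : ℝ)))
    (g : (Fin n → ℝ) → (Fin n → ℝ) → Matrix (Fin n) (Fin n) ℝ)
    (hg : ∀ x y i j, g x y i j =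
      (1 / 2 : ℝ) * iteratedFDeriv ℝ 2 (fun z => (F x z) ^ 2) y
        ![Pi.single i 1, Pi.single j 1])
    (hgpos : ∀ x ∈ U, ∀ y : Fin n → ℝ, y ≠ 0 → (g x y).PosDef)
    -- spray coefficients
    (G : (Fin n → ℝ) → (Fin n → ℝ) → Fin n → ℝ)
    (hG : ∀ x ∈ U, ∀ y : Fin n → ℝ, y ≠ 0 → ∀ i, G x y i =
      (1 / 4 : ℝ) * ∑ l, ∑ j, ∑ k, (g x y)⁻¹ i l *
        (2 * fderiv ℝ (fun x' => g x' y j l) x (Pi.single k 1)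
          - fderiv ℝ (fun x' => g x' y j k) x (Pi.single l 1)) * y j * y k)
    -- mean Berwald curvature E_{ij} = ½ ∂²(∂G^s/∂y^s)/∂y^i∂y^j
    (E : (Fin n → ℝ) → (Fin n → ℝ) → Fin n → Fin n → ℝ)
    (hE : ∀ x ∈ U, ∀ y : Fin n → ℝ, y ≠ 0 → ∀ i j, E x y i j =
      (1 / 2 : ℝ) * iteratedFDeriv ℝ 2
        (fun z => ∑ s, fderiv ℝ (fun z' => G x z' s) z (Pi.single s 1)) y
        ![Pi.single i 1, Pi.single j 1])
    -- H-curvature H_{ij} = y^l ∂E_{ij}/∂x^l - 2 G^s ∂E_{ij}/∂y^s - E_{sj} N^s_i - E_{is} N^s_j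
    (H : (Fin n → ℝ) → (Fin n → ℝ) → Fin n → Fin n → ℝ)
    (hH : ∀ x ∈ U, ∀ y : Fin n → ℝ, y ≠ 0 → ∀ i j, H x y i j =
      fderiv ℝ (fun x' => E x' y i j) x y
        - 2 * ∑ s, G x y s * fderiv ℝ (fun z => E x z i j) y (Pi.single s 1)
        - ∑ s, E x y s j * fderiv ℝ (fun z => G x z s) y (Pi.single i 1)
        - ∑ s, E x y i s * fderiv ℝ (fun z => G x z s) y (Pi.single j 1))
    -- angular metric h_{ij} = g_{ij} - F⁻² y_i y_j
    (hang : (Fin n → ℝ) → (Fin n → ℝ) → Fin n → Fin n → ℝ)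
    (hhang : ∀ x ∈ U, ∀ y : Fin n → ℝ, y ≠ 0 → ∀ i j, hang x y i j =
      g x y i j - (∑ l, g x y i l * y l) * (∑ l, g x y j l * y l) / (F x y) ^ 2)
    -- isotropic H-curvature with a smooth 1-form θ = θ_k(x) y^k
    (θ : (Fin n → ℝ) → (Fin n → ℝ))
    (hθsmooth : ContDiffOn ℝ (⊤ : ℕ∞) θ U)
    (hiso : ∀ x ∈ U, ∀ y : Fin n → ℝ, y ≠ 0 → ∀ i j,
      H x y i j = (((n : ℝ) + 1) / (2 * F x y)) * (∑ k, θ x k * y k) * hang x y i j) :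
    ∀ x ∈ U, ∀ y : Fin n → ℝ, y ≠ 0 → ∀ i j, H x y i j = 0 := by
  intro x hx y hy i j
  have hny : -y ≠ (0 : Fin n → ℝ) := neg_ne_zero.mpr hy
  -- A(x, -y) = (-1)^m A(x, y)
  have Aneg : ∀ x' (y' : Fin n → ℝ), A x' (-y') = (-1 : ℝ) ^ m * A x' y' := by
    intro x' y'
    rw [hAT, hAT]
    have h1 : (fun _ : Fin m => -y') = fun i : Fin m => (-1 : ℝ) • ((fun _ : Fin m => y') i) := by
      funext k; simp
    rw [h1, ContinuousMultilinearMap.map_smul_univ]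
    simp
  rcases Nat.even_or_odd m with hme | hmo
  swap
  · -- odd m : contradiction with positivity
    exfalso
    have h1 := hApos x hx y hy
    have h2 := hApos x hx (-y) hny
    have h3 := Aneg x y
    rw [hmo.neg_one_pow] at h3
    linarith
  -- even m : everything in sight is even/odd in y
  have Aeven : ∀ x' (y' : Fin n → ℝ), A x' (-y') = A x' y' := by
    intro x' y'; rw [Aneg, hme.neg_one_pow, one_mul]
  have Feven : ∀ x' (y' : Fin n → ℝ), F x' (-y') = F x' y' := by
    intro x' y'; rw [hF, hF, Aeven]
  -- g is even in y
  have geven : ∀ x' (y' : Fin n → ℝ) i j, g x' (-y') i j = g x' y' i j := by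
    intro x' y' i j
    rw [hg, hg]
    congr 1
    have hf : (fun z => (F x' z) ^ 2) = fun z => ((fun w => (F x' w) ^ 2) (-z)) := by
      funext z; simp only [Feven]
    conv_lhs => rw [hf]
    have h5 := itfd2_negpt (fun w => (F x' w) ^ 2) (-y') (Pi.single i 1) (Pi.single j 1)
    rw [neg_neg] at h5
    exact h5
  have gevenM : ∀ x' (y' : Fin n → ℝ), g x' (-y') = g x' y' := by
    intro x' y'; ext i j; exact geven x' y' i j
  -- G is even in y on U × (ℝⁿ \ {0})
  have Geven : ∀ x' ∈ U, ∀ y' : Fin n → ℝ, y' ≠ 0 → ∀ s, G x' (-y') s = G x' y' s := by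
    intro x' hx' y' hy' s
    rw [hG x' hx' (-y') (neg_ne_zero.mpr hy') s, hG x' hx' y' hy' s]
    have hfun : ∀ j l, (fun x'' => g x'' (-y') j l) = fun x'' => g x'' y' j l := by
      intro j l; funext x''; exact geven x'' y' j l
    simp only [gevenM, hfun, Pi.neg_apply, mul_neg, neg_mul, neg_neg]
  -- derivative of G in y is odd
  have Gder : ∀ x' ∈ U, ∀ z : Fin n → ℝ, z ≠ 0 → ∀ s (v : Fin n → ℝ),
      fderiv ℝ (fun z' => G x' z' s) (-z) v = -(fderiv ℝ (fun z' => G x' z' s) z v) := by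
    intro x' hx' z hz s v
    have heq : (fun z' => G x' z' s) =ᶠ[nhds z] fun z' => G x' (-z') s := by
      refine Filter.eventuallyEq_of_mem (compl_singleton_mem_nhds hz) ?_
      intro w hw
      exact (Geven x' hx' w hw s).symm
    have h1 : fderiv ℝ (fun z' => G x' z' s) z v
        = -(fderiv ℝ (fun z' => G x' z' s) (-z) v) := by
      have h2 : fderiv ℝ (fun z' => G x' z' s) z = fderiv ℝ (fun z' => G x' (-z') s) z :=
        heq.fderiv_eq
      rw [h2]
      exact fderiv_negpt (fun w => G x' w s) z v
    linarith
  -- E is odd in y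
  have Eodd : ∀ x' ∈ U, ∀ y' : Fin n → ℝ, y' ≠ 0 → ∀ i j,
      E x' (-y') i j = -(E x' y' i j) := by
    intro x' hx' y' hy' i j
    rw [hE x' hx' (-y') (neg_ne_zero.mpr hy') i j, hE x' hx' y' hy' i j]
    set Φ : (Fin n → ℝ) → ℝ :=
      fun z => ∑ s, fderiv ℝ (fun z' => G x' z' s) z (Pi.single s 1) with hΦ
    have Φodd : ∀ z : Fin n → ℝ, z ≠ 0 → Φ (-z) = -(Φ z) := by
      intro z hz
      rw [hΦ]
      simp only
      rw [← Finset.sum_neg_distrib]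
      refine Finset.sum_congr rfl fun s _ => ?_
      exact Gder x' hx' z hz s (Pi.single s 1)
    have hcong : iteratedFDeriv ℝ 2 Φ (-y')
        = iteratedFDeriv ℝ 2 (fun z => -((fun w => Φ (-w)) z)) (-y') := by
      refine itfd_congr_nhds ?_
      refine Filter.eventuallyEq_of_mem (compl_singleton_mem_nhds (neg_ne_zero.mpr hy')) ?_
      intro w hw
      have := Φodd (-w) (neg_ne_zero.mpr hw)
      rw [neg_neg] at this
      simp only [this, neg_neg]
    rw [hcong]
    have hneg : iteratedFDeriv ℝ 2 (fun z => -((fun w => Φ (-w)) z)) (-y')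
          ![Pi.single i 1, Pi.single j 1]
        = -(iteratedFDeriv ℝ 2 (fun z => Φ (-z)) (-y') ![Pi.single i 1, Pi.single j 1]) := by
      have h0 : (fun z : Fin n → ℝ => -((fun w => Φ (-w)) z)) = -(fun w : Fin n → ℝ => Φ (-w)) :=
        rfl
      rw [h0, iteratedFDeriv_neg_apply]
      simp
    have h5 := itfd2_negpt Φ (-y') (Pi.single i 1) (Pi.single j 1)
    rw [neg_neg] at h5
    rw [hneg, h5]
    ring
  -- H is even in y
  have Hsym : H x (-y) i j = H x y i j := by
    rw [hH x hx (-y) hny i j, hH x hx y hy i j]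
    have t1 : fderiv ℝ (fun x' => E x' (-y) i j) x (-y)
        = fderiv ℝ (fun x' => E x' y i j) x y := by
      have he : (fun x' => E x' (-y) i j) =ᶠ[nhds x] fun x' => -(E x' y i j) :=
        Filter.eventuallyEq_of_mem (hU.mem_nhds hx) fun x' hx' => Eodd x' hx' y hy i j
      rw [he.fderiv_eq, fderiv_fun_neg]
      simp
    have t2 : ∀ s, fderiv ℝ (fun z => E x z i j) (-y) (Pi.single s 1)
        = fderiv ℝ (fun z => E x z i j) y (Pi.single s 1) := by
      intro s
      have he : (fun z => E x z i j) =ᶠ[nhds (-y)] fun z => -((fun w => E x w i j) (-z)) := by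
        refine Filter.eventuallyEq_of_mem (compl_singleton_mem_nhds hny) ?_
        intro w hw
        have := Eodd x hx (-w) (neg_ne_zero.mpr hw) i j
        rw [neg_neg] at this
        simp only [this, neg_neg]
      rw [he.fderiv_eq]
      have : fderiv ℝ (fun z => -((fun w => E x w i j) (-z))) (-y) (Pi.single s 1)
          = -(fderiv ℝ (fun z => ((fun w => E x w i j) (-z))) (-y) (Pi.single s 1)) := by
        rw [fderiv_fun_neg]; simp
      rw [this]
      have h4 := fderiv_negpt (fun w => E x w i j) (-y) (Pi.single s 1)
      rw [neg_neg] at h4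
      rw [h4, neg_neg]
    have t3 : ∀ v : Fin n → ℝ, ∀ s, fderiv ℝ (fun z => G x z s) (-y) v
        = -(fderiv ℝ (fun z => G x z s) y v) := fun v s => Gder x hx y hy s v
    have s1 : (∑ s, G x (-y) s * fderiv ℝ (fun z => E x z i j) (-y) (Pi.single s 1))
        = ∑ s, G x y s * fderiv ℝ (fun z => E x z i j) y (Pi.single s 1) :=
      Finset.sum_congr rfl fun s _ => by rw [Geven x hx y hy s, t2 s]
    have s2 : (∑ s, E x (-y) s j * fderiv ℝ (fun z => G x z s) (-y) (Pi.single i 1))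
        = ∑ s, E x y s j * fderiv ℝ (fun z => G x z s) y (Pi.single i 1) :=
      Finset.sum_congr rfl fun s _ => by
        rw [Eodd x hx y hy s j, t3 (Pi.single i 1) s]; ring
    have s3 : (∑ s, E x (-y) i s * fderiv ℝ (fun z => G x z s) (-y) (Pi.single j 1))
        = ∑ s, E x y i s * fderiv ℝ (fun z => G x z s) y (Pi.single j 1) :=
      Finset.sum_congr rfl fun s _ => by
        rw [Eodd x hx y hy i s, t3 (Pi.single j 1) s]; ring
    rw [t1, s1, s2, s3]
  -- angular metric is even in y
  have hangeven : hang x (-y) i j = hang x y i j := by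
    rw [hhang x hx (-y) hny i j, hhang x hx y hy i j, Feven]
    have hs : ∀ i', (∑ l, g x (-y) i' l * (-y) l) = -(∑ l, g x y i' l * y l) := by
      intro i'
      rw [← Finset.sum_neg_distrib]
      refine Finset.sum_congr rfl fun l _ => ?_
      rw [geven]; simp [mul_neg]
    rw [geven, hs, hs, neg_mul_neg]
  -- conclude
  have h1 := hiso x hx y hy i j
  have h2 := hiso x hx (-y) hny i j
  rw [Hsym, hangeven, Feven] at h2
  have hθ : (∑ k, θ x k * (-y) k) = -(∑ k, θ x k * y k) := by
    rw [← Finset.sum_neg_distrib]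
    refine Finset.sum_congr rfl fun k _ => ?_
    simp [mul_neg]
  rw [hθ] at h2
  linarith [h1, h2]
end

section
/- Let n ≥ 2. Assume A(y) > 0 for all y ≠ 0 and assume the fundamental form g(y)(u,v) := ½ D²(A^{2/m})(y)(u,v) is positive definite for every y ≠ 0. Then for every y ≠ 0 the equation m·A(y)·D²A(y)(u,v) = (m−1)·DA(y)(u)·DA(y)(v) cannot hold for all u, v ∈ ℝ^n; that is, m·A·A_{ij} + (1−m)·A_i·A_j = 0 is impossible, since it would force the angular metric h_{ij} to vanish. -/
/-- if `n ≥ 2`, `A > 0` away from the origin, and the fundamental form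
`g(y)(u,v) = ½ D²(A^{2/m})(y)(u,v)` is positive definite for every `y ≠ 0`, then at no
`y ≠ 0` can `m·A·D²A(u,v) = (m-1)·DA(u)·DA(v)` hold for all `u, v` (this would force the
angular metric to vanish). -/
theorem mth_root_angular_metric_nonvanishing
    {n m : ℕ} (hn : 2 ≤ n) (hm : 2 ≤ m)
    (T : ContinuousMultilinearMap ℝ (fun _ : Fin m => (Fin n → ℝ)) ℝ)
    (hTsymm : ∀ (σ : Equiv.Perm (Fin m)) (v : Fin m → (Fin n → ℝ)), T (v ∘ σ) = T v)
    (A : (Fin n → ℝ) → ℝ)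
    (hA : ∀ y, A y = T (fun _ => y))
    (hApos : ∀ y : Fin n → ℝ, y ≠ 0 → 0 < A y)
    (hgpos : ∀ y : Fin n → ℝ, y ≠ 0 → ∀ u : Fin n → ℝ, u ≠ 0 →
      0 < (1 / 2 : ℝ) * iteratedFDeriv ℝ 2 (fun z => A z ^ ((2 : ℝ) / (m : ℝ))) y ![u, u]) :
    ∀ y : Fin n → ℝ, y ≠ 0 →
      ¬ (∀ u v : Fin n → ℝ,
          (m : ℝ) * A y * iteratedFDeriv ℝ 2 A y ![u, v]
            = ((m : ℝ) - 1) * (fderiv ℝ A y u) * (fderiv ℝ A y v)) := by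
  intro y hy H
  -- A is smooth
  have hAeq : A = fun z => T (fun _ => z) := funext hA
  have hAsmooth : ContDiff ℝ (⊤ : ℕ∞) A := by
    rw [hAeq]
    exact T.contDiff.comp (contDiff_pi.2 fun _ => contDiff_id)
  have hAdiff : Differentiable ℝ A := hAsmooth.differentiable (by simp)
  set ℓ : (Fin n → ℝ) →L[ℝ] ℝ := fderiv ℝ A y with hℓ
  -- find a nonzero direction killed by DA(y)
  obtain ⟨u, hu0, hℓu⟩ : ∃ u : Fin n → ℝ, u ≠ 0 ∧ ℓ u = 0 := by
    by_contra hcon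
    push_neg at hcon
    have hinj : Function.Injective (ℓ : (Fin n → ℝ) →ₗ[ℝ] ℝ) := by
      intro a b hab
      by_contra hne
      exact hcon (a - b) (sub_ne_zero.2 hne) (by rw [map_sub]; exact sub_eq_zero.2 hab)
    have hle := LinearMap.finrank_le_finrank_of_injective hinj
    simp [Module.finrank_self] at hle
    omega
  have hAy : 0 < A y := hApos y hy
  have hm0 : (m : ℝ) ≠ 0 := by positivity
  -- second derivative of A at y in direction (u,u) vanishes
  have hB : fderiv ℝ (fderiv ℝ A) y u u = 0 := by
    have := H u u
    rw [hℓ] at hℓu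
    rw [iteratedFDeriv_two_apply] at this
    simp only [Matrix.cons_val_zero, Matrix.cons_val_one, Matrix.head_cons, hℓ, hℓu,
      mul_zero, zero_mul] at this
    have := mul_eq_zero.1 this
    rcases this with h | h
    · exact absurd h (by positivity)
    · exact h
  set c : ℝ := (2 : ℝ) / (m : ℝ) with hc
  set F : (Fin n → ℝ) → ℝ := fun z => A z ^ c with hF
  set φ : (Fin n → ℝ) → ℝ := fun z => c * A z ^ (c - 1) with hφ
  -- on the neighborhood where A > 0, fderiv F = φ • fderiv A
  have hopen : IsOpen {z : Fin n → ℝ | 0 < A z} :=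
    isOpen_lt continuous_const hAsmooth.continuous
  have hmem : {z : Fin n → ℝ | 0 < A z} ∈ nhds y := hopen.mem_nhds hAy
  have hev : fderiv ℝ F =ᶠ[nhds y] fun z => φ z • fderiv ℝ A z := by
    filter_upwards [hmem] with z hz
    exact ((hAdiff z).hasFDerivAt.rpow_const (Or.inl (ne_of_gt hz))).fderiv
  -- derivative of φ at y
  have hφ' : HasFDerivAt φ (c • ((c - 1) * A y ^ (c - 1 - 1)) • ℓ) y :=
    ((hAdiff y).hasFDerivAt.rpow_const (Or.inl (ne_of_gt hAy))).const_mul c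
  -- derivative of fderiv A at y
  have hDA : HasFDerivAt (fderiv ℝ A) (fderiv ℝ (fderiv ℝ A) y) y := by
    have : Differentiable ℝ (fderiv ℝ A) :=
      (hAsmooth.fderiv_right (WithTop.coe_le_coe.2 le_top : (1 : WithTop ℕ∞) + 1 ≤ ((⊤ : ℕ∞) : WithTop ℕ∞))).differentiable one_ne_zero
    exact (this y).hasFDerivAt
  have hG : HasFDerivAt (fun z => φ z • fderiv ℝ A z)
      (φ y • fderiv ℝ (fderiv ℝ A) y +
        (c • ((c - 1) * A y ^ (c - 1 - 1)) • ℓ).smulRight (fderiv ℝ A y)) y :=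
    hφ'.smul hDA
  have key : iteratedFDeriv ℝ 2 F y ![u, u] = 0 := by
    rw [iteratedFDeriv_two_apply]
    have h1 : fderiv ℝ (fderiv ℝ F) y = fderiv ℝ (fun z => φ z • fderiv ℝ A z) y :=
      hev.fderiv_eq
    rw [Matrix.cons_val_zero, Matrix.cons_val_one, Matrix.cons_val_zero, h1, hG.fderiv]
    rw [hℓ] at hℓu
    simp [hℓu, hB]
  have := hgpos y hy u hu0
  rw [hF] at key
  rw [key] at this
  simp at this
end
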